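/- arXiv:1612.04489 — 8 statements merged into one kernel-verified Lean document; each statement's English description precedes it below -/
import Mathlib

section
/- The Reissner–Nordström–de Sitter parameters (Λ, M, Q) with Λ > 0, M > 0 and Q ∈ ℝ are non-degenerate if and only if one of the following holds: (i) Q = 0 and 0 < 9ΛM² < 1; or (ii) Q ≠ 0, D := 9M² − 8Q² > 0, and max(0, 6(M − √D)/(3M − √D)³) < Λ < 6(M + √D)/(3M + √D)³. -/
/-- The Reissner–Nordström–de Sitter metric coefficient
`μ(r) = 1 − 2M/r − Λr²/3 + Q²/r²`. -/
noncomputable def mu (Λ M Q r : ℝ) : ℝ := 1 - 2 * M / r - Λ * r ^ 2 / 3 + Q ^ 2 / r ^ 2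

/-- `ψ(r) = μ(r)/r²`. -/
noncomputable def psi (Λ M Q r : ℝ) : ℝ := mu Λ M Q r / r ^ 2

/-- Non-degeneracy of the RNdS parameters `(Λ, M, Q)`, witnessed by the horizon radii
`0 < rm < rp`: `rm`, `rp` are simple roots of `μ`, `μ` has no roots in `(rm, rp) ∪ (rp, ∞)`
(so they are the two largest positive roots), and `ψ = μ/r²` has exactly one critical point
`rP` in `(rm, rp)`, which is non-degenerate (`ψ″(rP) ≠ 0`). -/
def NondegAt (Λ M Q rm rp : ℝ) : Prop :=
  0 < rm ∧ rm < rp ∧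
  mu Λ M Q rm = 0 ∧ mu Λ M Q rp = 0 ∧
  deriv (mu Λ M Q) rm ≠ 0 ∧ deriv (mu Λ M Q) rp ≠ 0 ∧
  (∀ r : ℝ, (rm < r ∧ r < rp) ∨ rp < r → mu Λ M Q r ≠ 0) ∧
  ∃ rP ∈ Set.Ioo rm rp,
    deriv (psi Λ M Q) rP = 0 ∧
    deriv (deriv (psi Λ M Q)) rP ≠ 0 ∧
    ∀ r ∈ Set.Ioo rm rp, deriv (psi Λ M Q) r = 0 → r = rP

/-- The RNdS parameters `(Λ, M, Q)` are non-degenerate. -/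
def RNdSNondeg (Λ M Q : ℝ) : Prop := ∃ rm rp : ℝ, NondegAt Λ M Q rm rp

/-!
Away from `r = 0`, `μ(r) = r² (Λ(r) - Λ) / 3` and `ψ(r) = (Λ(r) - Λ) / 3` with
`Λ(r) = 3 (r² - 2Mr + Q²) / r⁴`. So horizons are the solutions of `Λ(r) = Λ`, and the critical
points of `ψ` are those of `Λ(r)`: the roots `r₁ ≤ r₂` of `r² - 3Mr + 2Q²` (the photon spheres),
real iff `D = 9M² - 8Q² ≥ 0`. At a horizon `μ'(r) = -2 (r² - 3Mr + 2Q²) / r³`, so a horizon is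
simple iff it is not a photon sphere. For `r > 0`, `Λ(r)` increases on `[r₁, r₂]` and decreases
to `0` on `[r₂, ∞)`.

A non-degenerate critical point forces `D > 0`. As `Λ > 0` and there is no horizon beyond `r₊`,
the critical point between the horizons is `r₂`, and `r₁ < r₋ < r₂ < r₊`; monotonicity then gives
`Λ(r₁) < Λ < Λ(r₂)`. Conversely, these inequalities produce `r₋ ∈ (r₁, r₂)` and `r₊ > r₂` by the
intermediate value theorem. Finally `Λ((3M ± √D) / 2) = 6 (M ± √D) / (3M ± √D)³`.
-/

open Set Filter Topology

namespace RNdS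

noncomputable def horizonLambda (M Q r : ℝ) : ℝ := 3 * (r ^ 2 - 2 * M * r + Q ^ 2) / r ^ 4

def photonPoly (M Q r : ℝ) : ℝ := r ^ 2 - 3 * M * r + 2 * Q ^ 2

noncomputable def photonRadius (M Q : ℝ) : ℝ := (3 * M + √(9 * M ^ 2 - 8 * Q ^ 2)) / 2

noncomputable def innerPhotonRadius (M Q : ℝ) : ℝ := (3 * M - √(9 * M ^ 2 - 8 * Q ^ 2)) / 2

variable {Λ M Q r : ℝ}

lemma mu_eq_mul_horizonLambda_sub (hr : r ≠ 0) :
    mu Λ M Q r = r ^ 2 * (horizonLambda M Q r - Λ) / 3 := by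
  unfold mu horizonLambda
  field_simp
  ring

lemma mu_eq_zero_iff (hr : r ≠ 0) : mu Λ M Q r = 0 ↔ horizonLambda M Q r = Λ := by
  simp [mu_eq_mul_horizonLambda_sub hr, hr, sub_eq_zero]

lemma hasDerivAt_horizonLambda (hr : r ≠ 0) :
    HasDerivAt (horizonLambda M Q) (-6 * photonPoly M Q r / r ^ 5) r := by
  have hnum : HasDerivAt (fun x => 3 * (x ^ 2 - 2 * M * x + Q ^ 2)) (3 * (2 * r - 2 * M)) r := by
    simpa using (((hasDerivAt_pow 2 r).sub ((hasDerivAt_id r).const_mul (2 * M))).add_const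
      (Q ^ 2)).const_mul 3
  refine (hnum.div (hasDerivAt_pow 4 r) (pow_ne_zero 4 hr)).congr_deriv ?_
  unfold photonPoly
  field_simp
  ring

lemma continuousOn_horizonLambda : ContinuousOn (horizonLambda M Q) (Ioi 0) :=
  fun _ hx => (hasDerivAt_horizonLambda (ne_of_gt hx)).continuousAt.continuousWithinAt

lemma tendsto_horizonLambda_atTop : Tendsto (horizonLambda M Q) atTop (𝓝 0) := by
  have hpoly :
      horizonLambda M Q = fun r => 3 * r⁻¹ ^ 2 - 6 * M * r⁻¹ ^ 3 + 3 * Q ^ 2 * r⁻¹ ^ 4 := by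
    funext r
    rcases eq_or_ne r 0 with rfl | hr
    · simp [horizonLambda]
    · unfold horizonLambda
      field_simp
      ring
  rw [hpoly]
  have h := tendsto_inv_atTop_zero (𝕜 := ℝ)
  simpa using (((h.pow 2).const_mul 3).sub ((h.pow 3).const_mul (6 * M))).add
    ((h.pow 4).const_mul (3 * Q ^ 2))

lemma psi_eventuallyEq (hr : r ≠ 0) :
    psi Λ M Q =ᶠ[𝓝 r] fun x => (horizonLambda M Q x - Λ) / 3 := by
  filter_upwards [isOpen_ne.mem_nhds hr] with x hx
  rw [psi, mu_eq_mul_horizonLambda_sub hx]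
  field_simp

lemma deriv_psi (hr : r ≠ 0) : deriv (psi Λ M Q) r = -2 * photonPoly M Q r / r ^ 5 := by
  rw [(psi_eventuallyEq hr).deriv_eq, ((hasDerivAt_horizonLambda hr).sub_const Λ).div_const 3
    |>.deriv]
  ring

lemma deriv_psi_eq_zero_iff (hr : r ≠ 0) : deriv (psi Λ M Q) r = 0 ↔ photonPoly M Q r = 0 := by
  simp [deriv_psi hr, hr]

lemma deriv_deriv_psi_of_photonPoly_eq_zero (hr : r ≠ 0) (hp : photonPoly M Q r = 0) :
    deriv (deriv (psi Λ M Q)) r = -2 * (2 * r - 3 * M) / r ^ 5 := by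
  have heq : deriv (psi Λ M Q) =ᶠ[𝓝 r] fun x => -2 * photonPoly M Q x / x ^ 5 := by
    filter_upwards [isOpen_ne.mem_nhds hr] with x hx
    exact deriv_psi hx
  have hpoly : HasDerivAt (fun x => -2 * photonPoly M Q x) (-2 * (2 * r - 3 * M)) r := by
    simpa [photonPoly] using (((hasDerivAt_pow 2 r).sub ((hasDerivAt_id r).const_mul (3 * M))
      ).add_const (2 * Q ^ 2)).const_mul (-2)
  have hquot : HasDerivAt (fun x => -2 * photonPoly M Q x / x ^ 5)
      ((-2 * (2 * r - 3 * M) * r ^ 5 - -2 * photonPoly M Q r * (5 * r ^ 4)) / (r ^ 5) ^ 2) r := by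
    exact hpoly.div (hasDerivAt_pow 5 r) (pow_ne_zero 5 hr)
  rw [heq.deriv_eq, hquot.deriv, hp]
  field_simp
  ring

lemma deriv_mu_of_mu_eq_zero (hr : r ≠ 0) (h : mu Λ M Q r = 0) :
    deriv (mu Λ M Q) r = -2 * photonPoly M Q r / r ^ 3 := by
  have heq : mu Λ M Q =ᶠ[𝓝 r] fun x => x ^ 2 * (horizonLambda M Q x - Λ) / 3 := by
    filter_upwards [isOpen_ne.mem_nhds hr] with x hx
    exact mu_eq_mul_horizonLambda_sub hx
  have hprod : HasDerivAt (fun x => x ^ 2 * (horizonLambda M Q x - Λ) / 3)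
      ((2 * r * (horizonLambda M Q r - Λ) + r ^ 2 * (-6 * photonPoly M Q r / r ^ 5)) / 3) r := by
    simpa using ((hasDerivAt_pow 2 r).mul ((hasDerivAt_horizonLambda hr).sub_const Λ)).div_const 3
  rw [heq.deriv_eq, hprod.deriv, (mu_eq_zero_iff hr).1 h]
  field_simp
  ring

lemma exists_mu_eq_zero_gt_of_lt_horizonLambda {c : ℝ} (hΛ : 0 < Λ) (hc : 0 < c)
    (h : Λ < horizonLambda M Q c) : ∃ r, c < r ∧ mu Λ M Q r = 0 := by
  obtain ⟨R, hR, hcR⟩ :=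
    ((tendsto_horizonLambda_atTop.eventually (Iio_mem_nhds hΛ)).and (eventually_gt_atTop c)).exists
  obtain ⟨r, hr, hgr⟩ := intermediate_value_Ioo' hcR.le
    (continuousOn_horizonLambda.mono fun x hx => hc.trans_le hx.1) ⟨hR, h⟩
  exact ⟨r, hr.1, (mu_eq_zero_iff (hc.trans hr.1).ne').2 hgr⟩

lemma photonPoly_eq_mul (hD : 0 ≤ 9 * M ^ 2 - 8 * Q ^ 2) (r : ℝ) :
    photonPoly M Q r = (r - innerPhotonRadius M Q) * (r - photonRadius M Q) := by
  unfold photonPoly innerPhotonRadius photonRadius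
  linear_combination (1 / 4 : ℝ) * Real.sq_sqrt hD

lemma photonPoly_eq_zero_iff (hD : 0 ≤ 9 * M ^ 2 - 8 * Q ^ 2) :
    photonPoly M Q r = 0 ↔ r = innerPhotonRadius M Q ∨ r = photonRadius M Q := by
  rw [photonPoly_eq_mul hD, mul_eq_zero, sub_eq_zero, sub_eq_zero]

lemma innerPhotonRadius_le_photonRadius : innerPhotonRadius M Q ≤ photonRadius M Q := by
  unfold innerPhotonRadius photonRadius
  linarith [Real.sqrt_nonneg (9 * M ^ 2 - 8 * Q ^ 2)]

lemma innerPhotonRadius_lt_photonRadius (hD : 0 < 9 * M ^ 2 - 8 * Q ^ 2) :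
    innerPhotonRadius M Q < photonRadius M Q := by
  unfold innerPhotonRadius photonRadius
  linarith [Real.sqrt_pos.2 hD]

lemma innerPhotonRadius_nonneg (hM : 0 < M) : 0 ≤ innerPhotonRadius M Q := by
  unfold innerPhotonRadius
  have : √(9 * M ^ 2 - 8 * Q ^ 2) ≤ 3 * M :=
    Real.sqrt_le_iff.2 ⟨by positivity, by nlinarith [sq_nonneg Q]⟩
  linarith

lemma strictMonoOn_horizonLambda {a : ℝ} (hD : 0 ≤ 9 * M ^ 2 - 8 * Q ^ 2) (ha : 0 < a)
    (ha' : innerPhotonRadius M Q ≤ a) :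
    StrictMonoOn (horizonLambda M Q) (Icc a (photonRadius M Q)) := by
  refine strictMonoOn_of_deriv_pos (convex_Icc _ _)
    (continuousOn_horizonLambda.mono fun x hx => ha.trans_le hx.1) fun x hx => ?_
  rw [interior_Icc] at hx
  have hx0 : 0 < x := ha.trans hx.1
  rw [(hasDerivAt_horizonLambda hx0.ne').deriv]
  have hp : photonPoly M Q x < 0 := by
    rw [photonPoly_eq_mul hD]
    exact mul_neg_of_pos_of_neg (by linarith [hx.1]) (by linarith [hx.2])
  exact div_pos (by linarith) (by positivity)

lemma strictAntiOn_horizonLambda (hD : 0 ≤ 9 * M ^ 2 - 8 * Q ^ 2) (h0 : 0 < photonRadius M Q) :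
    StrictAntiOn (horizonLambda M Q) (Ici (photonRadius M Q)) := by
  refine strictAntiOn_of_deriv_neg (convex_Ici _)
    (continuousOn_horizonLambda.mono fun x hx => h0.trans_le hx) fun x hx => ?_
  rw [interior_Ici] at hx
  have hx0 : 0 < x := h0.trans hx
  rw [(hasDerivAt_horizonLambda hx0.ne').deriv]
  have hp : 0 < photonPoly M Q x := by
    rw [photonPoly_eq_mul hD]
    exact mul_pos (by linarith [innerPhotonRadius_le_photonRadius (M := M) (Q := Q), mem_Ioi.1 hx])
      (by linarith [mem_Ioi.1 hx])
  exact div_neg_of_neg_of_pos (by linarith) (by positivity)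

lemma horizonLambda_half {x : ℝ} (hx : x ^ 2 = 9 * M ^ 2 - 8 * Q ^ 2) :
    horizonLambda M Q ((3 * M + x) / 2) = 6 * (M + x) / (3 * M + x) ^ 3 := by
  rcases eq_or_ne (3 * M + x) 0 with h | h
  · -- both sides vanish by the convention `y / 0 = 0`
    simp [horizonLambda, h]
  · unfold horizonLambda
    rw [show Q ^ 2 = (9 * M ^ 2 - x ^ 2) / 8 by linarith]
    field_simp
    ring

lemma horizonLambda_photonRadius (hD : 0 ≤ 9 * M ^ 2 - 8 * Q ^ 2) :
    horizonLambda M Q (photonRadius M Q) =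
      6 * (M + √(9 * M ^ 2 - 8 * Q ^ 2)) / (3 * M + √(9 * M ^ 2 - 8 * Q ^ 2)) ^ 3 :=
  horizonLambda_half (Real.sq_sqrt hD)

lemma horizonLambda_innerPhotonRadius (hD : 0 ≤ 9 * M ^ 2 - 8 * Q ^ 2) :
    horizonLambda M Q (innerPhotonRadius M Q) =
      6 * (M - √(9 * M ^ 2 - 8 * Q ^ 2)) / (3 * M - √(9 * M ^ 2 - 8 * Q ^ 2)) ^ 3 := by
  simpa only [innerPhotonRadius, ← sub_eq_add_neg] using
    horizonLambda_half (M := M) (Q := Q) (x := -√(9 * M ^ 2 - 8 * Q ^ 2))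
      (by simp [Real.sq_sqrt hD])

lemma deriv_mu_eq_zero_iff (hr : r ≠ 0) (h : mu Λ M Q r = 0) :
    deriv (mu Λ M Q) r = 0 ↔ photonPoly M Q r = 0 := by
  simp [deriv_mu_of_mu_eq_zero hr h, hr]

lemma min_lt_horizonLambda {rm rp : ℝ} (hD : 0 ≤ 9 * M ^ 2 - 8 * Q ^ 2) (hrm : 0 < rm)
    (hrm₁ : innerPhotonRadius M Q ≤ rm) (hrm₂ : rm ≤ photonRadius M Q) (hr : r ∈ Ioo rm rp) :
    min (horizonLambda M Q rm) (horizonLambda M Q rp) < horizonLambda M Q r := by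
  rcases le_or_gt r (photonRadius M Q) with hr₂ | hr₂
  · exact min_lt_of_left_lt <| strictMonoOn_horizonLambda hD hrm hrm₁
      ⟨le_rfl, hrm₂⟩ ⟨hr.1.le, hr₂⟩ hr.1
  · exact min_lt_of_right_lt <| strictAntiOn_horizonLambda hD (hrm.trans_le hrm₂)
      (mem_Ici.2 hr₂.le) (mem_Ici.2 (hr₂.le.trans hr.2.le)) hr.2

lemma deriv_deriv_psi_photonRadius_ne_zero (hD : 0 < 9 * M ^ 2 - 8 * Q ^ 2)
    (h₀ : 0 < photonRadius M Q) : deriv (deriv (psi Λ M Q)) (photonRadius M Q) ≠ 0 := by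
  rw [deriv_deriv_psi_of_photonPoly_eq_zero h₀.ne' ((photonPoly_eq_zero_iff hD.le).2 (Or.inr rfl)),
    show 2 * photonRadius M Q - 3 * M = √(9 * M ^ 2 - 8 * Q ^ 2) by unfold photonRadius; ring]
  exact div_ne_zero (mul_ne_zero (by norm_num) (Real.sqrt_pos.2 hD).ne') (by positivity)

lemma nondeg_of_lt_horizonLambda_photonRadius {a : ℝ} (hΛ : 0 < Λ)
    (hD : 0 < 9 * M ^ 2 - 8 * Q ^ 2) (ha : 0 < a) (ha₁ : innerPhotonRadius M Q ≤ a)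
    (ha₂ : a < photonRadius M Q) (hga : horizonLambda M Q a < Λ)
    (hΛ₂ : Λ < horizonLambda M Q (photonRadius M Q)) : RNdSNondeg Λ M Q := by
  set r₂ := photonRadius M Q
  have hr₂ : 0 < r₂ := ha.trans ha₂
  obtain ⟨rm, ⟨harm, hrm₂⟩, hgrm⟩ := intermediate_value_Ioo ha₂.le
    (continuousOn_horizonLambda.mono fun x hx => ha.trans_le hx.1) ⟨hga, hΛ₂⟩
  obtain ⟨rp, hr₂p, hμp⟩ := exists_mu_eq_zero_gt_of_lt_horizonLambda hΛ hr₂ hΛ₂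
  have hrm : 0 < rm := ha.trans harm
  have hrp : 0 < rp := hr₂.trans hr₂p
  have hgrp : horizonLambda M Q rp = Λ := (mu_eq_zero_iff hrp.ne').1 hμp
  have hμm : mu Λ M Q rm = 0 := (mu_eq_zero_iff hrm.ne').2 hgrm
  have hinner : innerPhotonRadius M Q < rm := ha₁.trans_lt harm
  have hcrit : ∀ r, innerPhotonRadius M Q < r → photonPoly M Q r = 0 → r = r₂ :=
    fun r hr hp => ((photonPoly_eq_zero_iff hD.le).1 hp).resolve_left hr.ne'
  refine ⟨rm, rp, hrm, hrm₂.trans hr₂p, hμm, hμp, ?_, ?_, ?_, r₂, ⟨hrm₂, hr₂p⟩, ?_,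
    deriv_deriv_psi_photonRadius_ne_zero hD hr₂, ?_⟩
  · rw [Ne, deriv_mu_eq_zero_iff hrm.ne' hμm]
    exact fun hp => hrm₂.ne (hcrit rm hinner hp)
  · rw [Ne, deriv_mu_eq_zero_iff hrp.ne' hμp]
    exact fun hp => hr₂p.ne' (hcrit rp (hinner.trans (hrm₂.trans hr₂p)) hp)
  · rintro r (hr | hpr)
    · rw [Ne, mu_eq_zero_iff (hrm.trans hr.1).ne']
      have := min_lt_horizonLambda hD.le hrm hinner.le hrm₂.le hr
      rw [hgrm, hgrp, min_self] at this
      exact this.ne'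
    · rw [Ne, mu_eq_zero_iff (hrp.trans hpr).ne', ← hgrp]
      exact (strictAntiOn_horizonLambda hD.le hr₂ (mem_Ici.2 hr₂p.le)
        (mem_Ici.2 (hr₂p.trans hpr).le) hpr).ne
  · exact (deriv_psi_eq_zero_iff hr₂.ne').2 ((photonPoly_eq_zero_iff hD.le).2 (Or.inr rfl))
  · intro r ⟨hmr, _⟩ hψ
    exact hcrit r (hinner.trans hmr) ((deriv_psi_eq_zero_iff (hrm.trans hmr).ne').1 hψ)

lemma photonPoly_eq_zero_and_disc_pos (hr : r ≠ 0) (h₁ : deriv (psi Λ M Q) r = 0)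
    (h₂ : deriv (deriv (psi Λ M Q)) r ≠ 0) : photonPoly M Q r = 0 ∧ 0 < 9 * M ^ 2 - 8 * Q ^ 2 := by
  have hp := (deriv_psi_eq_zero_iff hr).1 h₁
  have hdouble : 2 * r - 3 * M ≠ 0 := by
    rintro hz
    rw [deriv_deriv_psi_of_photonPoly_eq_zero hr hp, hz] at h₂
    simp at h₂
  refine ⟨hp, ?_⟩
  have : 9 * M ^ 2 - 8 * Q ^ 2 = (2 * r - 3 * M) ^ 2 := by
    unfold photonPoly at hp
    linear_combination (-4 : ℝ) * hp
  rw [this]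
  positivity

lemma photonRadius_mem_of_nondegAt {rm rp : ℝ} (hΛ : 0 < Λ) (h : NondegAt Λ M Q rm rp) :
    0 < 9 * M ^ 2 - 8 * Q ^ 2 ∧ innerPhotonRadius M Q < rm ∧ photonRadius M Q ∈ Ioo rm rp := by
  obtain ⟨hrm, hrmp, hμm, hμp, hdm, hdp, hnoroot, rP, hrP, hψ₁, hψ₂, huniq⟩ := h
  obtain ⟨hpP, hD⟩ := photonPoly_eq_zero_and_disc_pos (hrm.trans hrP.1).ne' hψ₁ hψ₂
  set r₁ := innerPhotonRadius M Q
  set r₂ := photonRadius M Q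
  have hr₁₂ : r₁ < r₂ := innerPhotonRadius_lt_photonRadius hD
  have hcrit : ∀ r ∈ Ioo rm rp, photonPoly M Q r = 0 → r = rP := fun r hr hp =>
    huniq r hr ((deriv_psi_eq_zero_iff (hrm.trans hr.1).ne').2 hp)
  have hsimple : ∀ r, 0 < r → mu Λ M Q r = 0 → deriv (mu Λ M Q) r ≠ 0 → r ≠ r₁ ∧ r ≠ r₂ :=
    fun r hr hμ hd => by
      rw [Ne, deriv_mu_eq_zero_iff hr.ne' hμ, photonPoly_eq_zero_iff hD.le] at hd
      exact not_or.1 hd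
  have hrp := hrm.trans hrmp
  rcases (photonPoly_eq_zero_iff hD.le).1 hpP with rfl | rfl
  · exfalso
    have hr₂p : rp < r₂ := by
      refine lt_of_le_of_ne (not_lt.1 fun hr₂p => hr₁₂.ne' ?_) (hsimple rp hrp hμp hdp).2
      exact hcrit r₂ ⟨hrP.1.trans hr₁₂, hr₂p⟩ ((photonPoly_eq_zero_iff hD.le).2 (Or.inr rfl))
    have hΛ₂ : Λ < horizonLambda M Q r₂ := by
      rw [← (mu_eq_zero_iff hrp.ne').1 hμp]
      exact strictMonoOn_horizonLambda hD.le hrp hrP.2.le ⟨le_rfl, hr₂p.le⟩ ⟨hr₂p.le, le_rfl⟩ hr₂p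
    obtain ⟨r, hr, hμ⟩ := exists_mu_eq_zero_gt_of_lt_horizonLambda hΛ (hrp.trans hr₂p) hΛ₂
    exact hnoroot r (Or.inr (hr₂p.trans hr)) hμ
  · refine ⟨hD, lt_of_le_of_ne (not_lt.1 fun hmr₁ => hr₁₂.ne ?_)
      (hsimple rm hrm hμm hdm).1.symm, hrP⟩
    exact hcrit r₁ ⟨hmr₁, hr₁₂.trans hrP.2⟩ ((photonPoly_eq_zero_iff hD.le).2 (Or.inl rfl))

theorem rnds_nondeg_iff_horizonLambda (hΛ : 0 < Λ) (hM : 0 < M) :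
    RNdSNondeg Λ M Q ↔ 0 < 9 * M ^ 2 - 8 * Q ^ 2 ∧
      max 0 (horizonLambda M Q (innerPhotonRadius M Q)) < Λ ∧
      Λ < horizonLambda M Q (photonRadius M Q) := by
  have hr₁ : 0 ≤ innerPhotonRadius M Q := innerPhotonRadius_nonneg hM
  constructor
  · rintro ⟨rm, rp, h⟩
    obtain ⟨hD, hr₁m, hrm₂, -⟩ := photonRadius_mem_of_nondegAt hΛ h
    have hrm : 0 < rm := h.1
    have hgrm : horizonLambda M Q rm = Λ := (mu_eq_zero_iff hrm.ne').1 h.2.2.1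
    refine ⟨hD, max_lt hΛ ?_, hgrm ▸ strictMonoOn_horizonLambda hD.le hrm hr₁m.le
      ⟨le_rfl, hrm₂.le⟩ ⟨hrm₂.le, le_rfl⟩ hrm₂⟩
    rcases hr₁.eq_or_lt with h₀ | h₀
    · simpa [← h₀, horizonLambda] using hΛ
    · exact hgrm ▸ strictMonoOn_horizonLambda hD.le h₀ le_rfl ⟨le_rfl, (hr₁m.trans hrm₂).le⟩
        ⟨hr₁m.le, hrm₂.le⟩ hr₁m
  · rintro ⟨hD, hlow, hup⟩
    have hr₁₂ := innerPhotonRadius_lt_photonRadius hD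
    rcases hr₁.eq_or_lt with h₀ | h₀
    · -- a vanishing inner photon radius forces `Q = 0`, and then `horizonLambda M 0 M < 0`
      have hQ : Q = 0 := by
        have := photonPoly_eq_mul hD.le 0
        rw [← h₀, photonPoly] at this
        simpa using this
      have hr₂ : photonRadius M Q = 3 * M := by
        linarith [show innerPhotonRadius M Q + photonRadius M Q = 3 * M by
          unfold innerPhotonRadius photonRadius; ring]
      refine nondeg_of_lt_horizonLambda_photonRadius hΛ hD hM (h₀ ▸ hM.le) (by linarith) ?_ hup
      have : horizonLambda M Q M = -3 / M ^ 2 := by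
        unfold horizonLambda
        rw [hQ]
        field_simp
        ring
      rw [this]
      linarith [div_neg_of_neg_of_pos (by norm_num : (-3 : ℝ) < 0) (by positivity : 0 < M ^ 2)]
    · exact nondeg_of_lt_horizonLambda_photonRadius hΛ hD h₀ le_rfl hr₁₂
        (lt_of_le_of_lt (le_max_right _ _) hlow) hup

end RNdS

open RNdS in
/-- Characterization of the non-degenerate Reissner–Nordström–de Sitter parameter range. -/
theorem rnds_nondeg_iff (Λ M Q : ℝ) (hΛ : 0 < Λ) (hM : 0 < M) :
    RNdSNondeg Λ M Q ↔
      (Q = 0 ∧ 0 < 9 * Λ * M ^ 2 ∧ 9 * Λ * M ^ 2 < 1) ∨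
      (Q ≠ 0 ∧ 0 < 9 * M ^ 2 - 8 * Q ^ 2 ∧
        max 0 (6 * (M - Real.sqrt (9 * M ^ 2 - 8 * Q ^ 2)) /
            (3 * M - Real.sqrt (9 * M ^ 2 - 8 * Q ^ 2)) ^ 3) < Λ ∧
        Λ < 6 * (M + Real.sqrt (9 * M ^ 2 - 8 * Q ^ 2)) /
            (3 * M + Real.sqrt (9 * M ^ 2 - 8 * Q ^ 2)) ^ 3) := by
  rw [rnds_nondeg_iff_horizonLambda hΛ hM]
  rcases eq_or_ne Q 0 with rfl | hQ
  · have hD : 9 * M ^ 2 - 8 * 0 ^ 2 = (3 * M) ^ 2 := by ring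
    rw [horizonLambda_innerPhotonRadius (hD ▸ sq_nonneg _),
      horizonLambda_photonRadius (hD ▸ sq_nonneg _), hD, Real.sqrt_sq (by positivity)]
    have h9 : (0 : ℝ) < 9 * M ^ 2 := by positivity
    have hup : 6 * (M + 3 * M) / (3 * M + 3 * M) ^ 3 = 1 / (9 * M ^ 2) := by
      field_simp
      ring
    -- the lower bound degenerates to `max 0 (y / 0) = 0`
    simp only [sub_self, ne_eq, OfNat.ofNat_ne_zero, not_false_eq_true, zero_pow, div_zero,
      max_self, hup, lt_div_iff₀ h9, true_and, not_true_eq_false, false_and, or_false]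
    have hΛM : 0 < 9 * Λ * M ^ 2 := by positivity
    exact ⟨fun ⟨_, _, h⟩ => ⟨hΛM, by linarith⟩, fun ⟨_, h⟩ => ⟨by positivity, hΛ, by linarith⟩⟩
  · simp only [hQ, false_and, ne_eq, not_false_eq_true, true_and, false_or]
    refine and_congr_right fun hD => ?_
    rw [horizonLambda_innerPhotonRadius hD.le, horizonLambda_photonRadius hD.le]
end

section
/- Assume M > 0, Q ≠ 0, D := 9M² − 8Q² > 0 and max(0, 6(M − √D)/(3M − √D)³) < Λ < 6(M + √D)/(3M + √D)³. Set r_{1−} := (3M − √D)/2 and r_{2−} := (3M + √D)/2. Then μ has exactly three positive roots, all simple (μ′ is nonzero at each); denoting them r_i < r₋ < r₊, they satisfy 0 < r_i < r_{1−} < r₋ < r_{2−} < r₊. Moreover μ > 0 on (0, r_i) ∪ (r₋, r₊) and μ < 0 on (r_i, r₋) ∪ (r₊, ∞). -/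
open Filter Topology Set

theorem eq_or_eq_or_eq_of_pos_neg_pos_neg {f : ℝ → ℝ} {ri rm rp : ℝ}
    (h₁ : ∀ r, 0 < r ∧ r < ri → 0 < f r) (h₂ : ∀ r, ri < r ∧ r < rm → f r < 0)
    (h₃ : ∀ r, rm < r ∧ r < rp → 0 < f r) (h₄ : ∀ r, rp < r → f r < 0)
    {r : ℝ} (hr : 0 < r) (hfr : f r = 0) : r = ri ∨ r = rm ∨ r = rp := by
  by_contra! h
  obtain ⟨hi, hm, hp⟩ := h
  rcases hi.lt_or_gt with hi | hi
  · exact (h₁ r ⟨hr, hi⟩).ne' hfr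
  rcases hm.lt_or_gt with hm | hm
  · exact (h₂ r ⟨hi, hm⟩).ne hfr
  rcases hp.lt_or_gt with hp | hp
  · exact (h₃ r ⟨hm, hp⟩).ne' hfr
  · exact (h₄ r hp).ne hfr

theorem exists_zeros_of_strictAntiOn_strictMonoOn_strictAntiOn {f : ℝ → ℝ} {c₁ c₂ : ℝ}
    (hc₁ : 0 < c₁) (hc : c₁ < c₂) (hf : ContinuousOn f (Ioi 0))
    (h₁ : StrictAntiOn f (Ioc 0 c₁)) (h₂ : StrictMonoOn f (Icc c₁ c₂))
    (h₃ : StrictAntiOn f (Ici c₂)) (hf₀ : ∀ᶠ r in 𝓝[>] 0, 0 < f r)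
    (hfc₁ : f c₁ < 0) (hfc₂ : 0 < f c₂) (hf_top : ∀ᶠ r in atTop, f r < 0) :
    ∃ ri rm rp : ℝ, 0 < ri ∧ ri < c₁ ∧ c₁ < rm ∧ rm < c₂ ∧ c₂ < rp ∧
      f ri = 0 ∧ f rm = 0 ∧ f rp = 0 ∧
      (∀ r, 0 < r ∧ r < ri → 0 < f r) ∧ (∀ r, ri < r ∧ r < rm → f r < 0) ∧
      (∀ r, rm < r ∧ r < rp → 0 < f r) ∧ (∀ r, rp < r → f r < 0) := by
  obtain ⟨a, hfa, ha⟩ := (hf₀.and (Ioo_mem_nhdsGT hc₁)).exists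
  obtain ⟨b, hfb, hb⟩ := (hf_top.and (eventually_gt_atTop c₂)).exists
  have hf' : ∀ {x y : ℝ}, 0 < x → ContinuousOn f (Icc x y) :=
    fun hx => hf.mono fun z hz => hx.trans_le hz.1
  obtain ⟨ri, hri, hfri⟩ := intermediate_value_Ioo' ha.2.le (hf' ha.1) ⟨hfc₁, hfa⟩
  obtain ⟨rm, hrm, hfrm⟩ := intermediate_value_Ioo hc.le (hf' hc₁) ⟨hfc₁, hfc₂⟩
  obtain ⟨rp, hrp, hfrp⟩ := intermediate_value_Ioo' hb.le (hf' (hc₁.trans hc)) ⟨hfb, hfc₂⟩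
  have hri0 : 0 < ri := ha.1.trans hri.1
  refine ⟨ri, rm, rp, hri0, hri.2, hrm.1, hrm.2, hrp.1, hfri, hfrm, hfrp, ?_, ?_, ?_, ?_⟩
  · rintro r ⟨hr0, hr⟩
    exact hfri ▸ h₁ ⟨hr0, hr.le.trans hri.2.le⟩ ⟨hri0, hri.2.le⟩ hr
  · rintro r ⟨hr₁, hr₂⟩
    rcases le_total r c₁ with h | h
    · exact hfri ▸ h₁ ⟨hri0, hri.2.le⟩ ⟨hri0.trans hr₁, h⟩ hr₁
    · exact hfrm ▸ h₂ ⟨h, hr₂.le.trans hrm.2.le⟩ ⟨hrm.1.le, hrm.2.le⟩ hr₂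
  · rintro r ⟨hr₁, hr₂⟩
    rcases le_total r c₂ with h | h
    · exact hfrm ▸ h₂ ⟨hrm.1.le, hrm.2.le⟩ ⟨hrm.1.le.trans hr₁.le, h⟩ hr₁
    · exact hfrp ▸ h₃ h hrp.1.le hr₂
  · intro r hr
    exact hfrp ▸ h₃ hrp.1.le (hrp.1.le.trans hr.le) hr

noncomputable def reducedMu (Λ M Q r : ℝ) : ℝ := (r ^ 2 - 2 * M * r + Q ^ 2) / r ^ 4 - Λ / 3

section

variable {Λ M Q r : ℝ}

theorem mu_eq_sq_mul_reducedMu (hr : r ≠ 0) : mu Λ M Q r = r ^ 2 * reducedMu Λ M Q r := by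
  unfold mu reducedMu
  field_simp
  ring

theorem mu_pos_iff (hr : 0 < r) : 0 < mu Λ M Q r ↔ 0 < reducedMu Λ M Q r := by
  rw [mu_eq_sq_mul_reducedMu hr.ne', mul_pos_iff_of_pos_left (by positivity)]

theorem mu_neg_iff (hr : 0 < r) : mu Λ M Q r < 0 ↔ reducedMu Λ M Q r < 0 := by
  rw [mu_eq_sq_mul_reducedMu hr.ne', ← neg_pos, ← mul_neg, mul_pos_iff_of_pos_left (by positivity),
    neg_pos]

theorem mu_eq_zero_iff (hr : r ≠ 0) : mu Λ M Q r = 0 ↔ reducedMu Λ M Q r = 0 := by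
  simp [mu_eq_sq_mul_reducedMu hr, hr]

theorem hasDerivAt_reducedMu (hr : r ≠ 0) :
    HasDerivAt (reducedMu Λ M Q) (-2 * (r ^ 2 - 3 * M * r + 2 * Q ^ 2) / r ^ 5) r := by
  have h := ((((hasDerivAt_pow 2 r).sub ((hasDerivAt_id r).const_mul (2 * M))).add_const
    (Q ^ 2)).div (hasDerivAt_pow 4 r) (pow_ne_zero 4 hr)).sub_const (Λ / 3)
  refine h.congr_deriv ?_
  simp only [Pi.sub_apply, id]
  field_simp
  ring

theorem continuousOn_reducedMu : ContinuousOn (reducedMu Λ M Q) (Ioi 0) :=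
  fun _ hx => (hasDerivAt_reducedMu (ne_of_gt hx)).continuousAt.continuousWithinAt

theorem hasDerivAt_mu_of_mu_eq_zero (hr : r ≠ 0) (h : mu Λ M Q r = 0) :
    HasDerivAt (mu Λ M Q) (-2 * (r ^ 2 - 3 * M * r + 2 * Q ^ 2) / r ^ 3) r := by
  have hμ : mu Λ M Q =ᶠ[𝓝 r] fun x => x ^ 2 * reducedMu Λ M Q x := by
    filter_upwards [eventually_ne_nhds hr] with x hx using mu_eq_sq_mul_reducedMu hx
  refine (((hasDerivAt_pow 2 r).mul (hasDerivAt_reducedMu hr)).congr_of_eventuallyEq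
    hμ).congr_deriv ?_
  rw [(mu_eq_zero_iff hr).1 h]
  field_simp
  ring

theorem strictAntiOn_reducedMu {D : Set ℝ} (hD : Convex ℝ D) (hD0 : D ⊆ Ioi 0)
    (hq : ∀ x ∈ interior D, 0 < x ^ 2 - 3 * M * x + 2 * Q ^ 2) :
    StrictAntiOn (reducedMu Λ M Q) D := by
  refine strictAntiOn_of_deriv_neg hD (continuousOn_reducedMu.mono hD0) fun x hx => ?_
  have hx0 : 0 < x := hD0 (interior_subset hx)
  rw [(hasDerivAt_reducedMu hx0.ne').deriv]
  exact div_neg_of_neg_of_pos (by linarith [hq x hx]) (by positivity)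

theorem strictMonoOn_reducedMu {D : Set ℝ} (hD : Convex ℝ D) (hD0 : D ⊆ Ioi 0)
    (hq : ∀ x ∈ interior D, x ^ 2 - 3 * M * x + 2 * Q ^ 2 < 0) :
    StrictMonoOn (reducedMu Λ M Q) D := by
  refine strictMonoOn_of_deriv_pos hD (continuousOn_reducedMu.mono hD0) fun x hx => ?_
  have hx0 : 0 < x := hD0 (interior_subset hx)
  rw [(hasDerivAt_reducedMu hx0.ne').deriv]
  exact div_pos (by linarith [hq x hx]) (by positivity)

theorem eventually_reducedMu_pos (hQ : Q ≠ 0) : ∀ᶠ r in 𝓝[>] 0, 0 < reducedMu Λ M Q r := by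
  have hP : Tendsto (fun r : ℝ => r ^ 2 - 2 * M * r + Q ^ 2 - Λ * r ^ 4 / 3) (𝓝 0) (𝓝 (Q ^ 2)) :=
    Continuous.tendsto' (by fun_prop) _ _ (by simp)
  filter_upwards [nhdsWithin_le_nhds (hP.eventually (lt_mem_nhds (by positivity))),
    self_mem_nhdsWithin] with r hPr hr
  have hr0 : r ≠ 0 := ne_of_gt hr
  have h : reducedMu Λ M Q r = (r ^ 2 - 2 * M * r + Q ^ 2 - Λ * r ^ 4 / 3) / r ^ 4 := by
    unfold reducedMu
    field_simp
  exact h ▸ div_pos hPr (by positivity)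

theorem tendsto_reducedMu_atTop : Tendsto (reducedMu Λ M Q) atTop (𝓝 (-(Λ / 3))) := by
  have h : Tendsto (fun t : ℝ => t ^ 2 - 2 * M * t ^ 3 + Q ^ 2 * t ^ 4 - Λ / 3) (𝓝 0)
      (𝓝 (-(Λ / 3))) :=
    Continuous.tendsto' (by fun_prop) _ _ (by simp)
  refine (h.comp tendsto_inv_atTop_zero).congr' ?_
  filter_upwards [eventually_ne_atTop 0] with r hr
  simp only [Function.comp_apply, reducedMu]
  field_simp

theorem reducedMu_critical_radius {s : ℝ} (hs : s ^ 2 = 9 * M ^ 2 - 8 * Q ^ 2) (h : 3 * M + s ≠ 0) :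
    reducedMu Λ M Q ((3 * M + s) / 2) = (6 * (M + s) / (3 * M + s) ^ 3 - Λ) / 3 := by
  unfold reducedMu
  field_simp
  linear_combination 6 * hs

theorem exists_zeros_reducedMu {r₁ r₂ : ℝ}
    (hfac : ∀ x, x ^ 2 - 3 * M * x + 2 * Q ^ 2 = (x - r₁) * (x - r₂)) (h₁ : 0 < r₁) (h₁₂ : r₁ < r₂)
    (hQ : Q ≠ 0) (hΛ : 0 < Λ) (hg₁ : reducedMu Λ M Q r₁ < 0) (hg₂ : 0 < reducedMu Λ M Q r₂) :
    ∃ ri rm rp : ℝ, 0 < ri ∧ ri < r₁ ∧ r₁ < rm ∧ rm < r₂ ∧ r₂ < rp ∧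
      reducedMu Λ M Q ri = 0 ∧ reducedMu Λ M Q rm = 0 ∧ reducedMu Λ M Q rp = 0 ∧
      (∀ r, 0 < r ∧ r < ri → 0 < reducedMu Λ M Q r) ∧
      (∀ r, ri < r ∧ r < rm → reducedMu Λ M Q r < 0) ∧
      (∀ r, rm < r ∧ r < rp → 0 < reducedMu Λ M Q r) ∧
      (∀ r, rp < r → reducedMu Λ M Q r < 0) := by
  refine exists_zeros_of_strictAntiOn_strictMonoOn_strictAntiOn h₁ h₁₂ continuousOn_reducedMu
    ?_ ?_ ?_ (eventually_reducedMu_pos hQ) hg₁ hg₂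
    (tendsto_reducedMu_atTop.eventually (gt_mem_nhds (by linarith)))
  · refine strictAntiOn_reducedMu (convex_Ioc 0 r₁) Ioc_subset_Ioi_self fun x hx => ?_
    rw [interior_Ioc] at hx
    rw [hfac]
    exact mul_pos_of_neg_of_neg (by linarith [hx.2]) (by linarith [hx.2])
  · refine strictMonoOn_reducedMu (convex_Icc r₁ r₂) (fun x hx => h₁.trans_le hx.1) fun x hx => ?_
    rw [interior_Icc] at hx
    rw [hfac]
    exact mul_neg_of_pos_of_neg (by linarith [hx.1]) (by linarith [hx.2])
  · refine strictAntiOn_reducedMu (convex_Ici r₂) (fun x hx => (h₁.trans h₁₂).trans_le hx)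
      fun x hx => ?_
    rw [interior_Ici] at hx
    rw [hfac]
    exact mul_pos (by linarith [hx.out]) (by linarith [hx.out])

theorem deriv_mu_ne_zero {r₁ r₂ : ℝ}
    (hfac : ∀ x, x ^ 2 - 3 * M * x + 2 * Q ^ 2 = (x - r₁) * (x - r₂)) (hr : r ≠ 0)
    (h : mu Λ M Q r = 0) (h₁ : r ≠ r₁) (h₂ : r ≠ r₂) : deriv (mu Λ M Q) r ≠ 0 := by
  rw [(hasDerivAt_mu_of_mu_eq_zero hr h).deriv, hfac]
  exact div_ne_zero (mul_ne_zero (by norm_num) (mul_ne_zero (sub_ne_zero.2 h₁) (sub_ne_zero.2 h₂)))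
    (pow_ne_zero 3 hr)

end

/-- Root structure of `μ` in the non-degenerate charged parameter range: `μ` has exactly
three positive roots `ri < rm < rp`, all simple, interlaced with
`r_{1−} = (3M − √D)/2` and `r_{2−} = (3M + √D)/2`, and the sign of `μ` alternates. -/
theorem rnds_three_roots (Λ M Q : ℝ) (hM : 0 < M) (hQ : Q ≠ 0)
    (hD : 0 < 9 * M ^ 2 - 8 * Q ^ 2)
    (hΛ₁ : max 0 (6 * (M - Real.sqrt (9 * M ^ 2 - 8 * Q ^ 2)) /
        (3 * M - Real.sqrt (9 * M ^ 2 - 8 * Q ^ 2)) ^ 3) < Λ)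
    (hΛ₂ : Λ < 6 * (M + Real.sqrt (9 * M ^ 2 - 8 * Q ^ 2)) /
        (3 * M + Real.sqrt (9 * M ^ 2 - 8 * Q ^ 2)) ^ 3) :
    ∃ ri rm rp : ℝ,
      0 < ri ∧
      ri < (3 * M - Real.sqrt (9 * M ^ 2 - 8 * Q ^ 2)) / 2 ∧
      (3 * M - Real.sqrt (9 * M ^ 2 - 8 * Q ^ 2)) / 2 < rm ∧
      rm < (3 * M + Real.sqrt (9 * M ^ 2 - 8 * Q ^ 2)) / 2 ∧
      (3 * M + Real.sqrt (9 * M ^ 2 - 8 * Q ^ 2)) / 2 < rp ∧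
      mu Λ M Q ri = 0 ∧ mu Λ M Q rm = 0 ∧ mu Λ M Q rp = 0 ∧
      deriv (mu Λ M Q) ri ≠ 0 ∧ deriv (mu Λ M Q) rm ≠ 0 ∧ deriv (mu Λ M Q) rp ≠ 0 ∧
      (∀ r : ℝ, 0 < r → mu Λ M Q r = 0 → r = ri ∨ r = rm ∨ r = rp) ∧
      (∀ r : ℝ, 0 < r ∧ r < ri → 0 < mu Λ M Q r) ∧
      (∀ r : ℝ, ri < r ∧ r < rm → mu Λ M Q r < 0) ∧
      (∀ r : ℝ, rm < r ∧ r < rp → 0 < mu Λ M Q r) ∧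
      (∀ r : ℝ, rp < r → mu Λ M Q r < 0) := by
  set s := Real.sqrt (9 * M ^ 2 - 8 * Q ^ 2)
  have hs : s ^ 2 = 9 * M ^ 2 - 8 * Q ^ 2 := Real.sq_sqrt hD.le
  have hs0 : 0 < s := Real.sqrt_pos.2 hD
  have hsM : s < 3 * M := by nlinarith [sq_pos_of_ne_zero hQ]
  have hΛ : 0 < Λ := (le_max_left _ _).trans_lt hΛ₁
  have hfac : ∀ x, x ^ 2 - 3 * M * x + 2 * Q ^ 2 = (x - (3 * M - s) / 2) * (x - (3 * M + s) / 2) :=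
    fun x => by linear_combination (1 / 4) * hs
  have hcrit₁ : reducedMu Λ M Q ((3 * M - s) / 2) < 0 := by
    have hs' : (-s) ^ 2 = 9 * M ^ 2 - 8 * Q ^ 2 := by rw [neg_sq, hs]
    have h := reducedMu_critical_radius (Λ := Λ) hs' (by linarith)
    simp only [← sub_eq_add_neg] at h
    linarith [(le_max_right _ _).trans_lt hΛ₁]
  have hcrit₂ : 0 < reducedMu Λ M Q ((3 * M + s) / 2) := by
    linarith [reducedMu_critical_radius (Λ := Λ) hs (by linarith)]
  obtain ⟨ri, rm, rp, hri, hri₁, hrm₁, hrm₂, hrp₂, hgi, hgm, hgp, hg₁, hg₂, hg₃, hg₄⟩ :=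
    exists_zeros_reducedMu hfac (by linarith) (by linarith) hQ hΛ hcrit₁ hcrit₂
  have hrm : 0 < rm := by linarith
  have hrp : 0 < rp := by linarith
  have hμ₁ : ∀ r, 0 < r ∧ r < ri → 0 < mu Λ M Q r := fun r hr => (mu_pos_iff hr.1).2 (hg₁ r hr)
  have hμ₂ : ∀ r, ri < r ∧ r < rm → mu Λ M Q r < 0 :=
    fun r hr => (mu_neg_iff (hri.trans hr.1)).2 (hg₂ r hr)
  have hμ₃ : ∀ r, rm < r ∧ r < rp → 0 < mu Λ M Q r :=
    fun r hr => (mu_pos_iff (hrm.trans hr.1)).2 (hg₃ r hr)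
  have hμ₄ : ∀ r, rp < r → mu Λ M Q r < 0 := fun r hr => (mu_neg_iff (hrp.trans hr)).2 (hg₄ r hr)
  have hμi := (mu_eq_zero_iff hri.ne').2 hgi
  have hμm := (mu_eq_zero_iff hrm.ne').2 hgm
  have hμp := (mu_eq_zero_iff hrp.ne').2 hgp
  exact ⟨ri, rm, rp, hri, hri₁, hrm₁, hrm₂, hrp₂, hμi, hμm, hμp,
    deriv_mu_ne_zero hfac hri.ne' hμi hri₁.ne (by linarith),
    deriv_mu_ne_zero hfac hrm.ne' hμm hrm₁.ne' hrm₂.ne,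
    deriv_mu_ne_zero hfac hrp.ne' hμp (by linarith) hrp₂.ne',
    fun r hr => eq_or_eq_or_eq_of_pos_neg_pos_neg hμ₁ hμ₂ hμ₃ hμ₄ hr, hμ₁, hμ₂, hμ₃, hμ₄⟩
end

section
/- If the RNdS parameters (Λ, M, Q) (with Λ > 0, M > 0) are non-degenerate, with horizon radii r₋ < r₊, then there is exactly one r_c ∈ (r₋, r₊) with μ′(r_c) = 0, and it satisfies μ″(r_c) < 0 and μ(r_c) > 0. In other words, μ has a unique and non-degenerate maximum r_c in the exterior region (r₋, r₊). -/
/-!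
Write `μ′(r) = G(r) / r³` with `G(r) = 2Mr − 2Λr⁴/3 − 2Q²` (`muDerivNum`), which is strictly concave as `Λ > 0`.
Since `μ → −∞`, `μ < 0` beyond `r₊`; as `μ′(r₊) ≠ 0`, `r₊` is not a local maximum, so `μ > 0`
on `(r₋, r₊)` and Rolle's theorem gives a critical point there. At any critical point `r` in
`(r₋, r₊)` we have `G(r) = 0` and `G′(r) < 0`: otherwise the tangent bound for `G` makes `μ′ < 0`
on `(r₋, r)`, contradicting `μ(r₋) = 0 < μ(r)`. Two zeros of `G` with negative slope cannot
coexist by the same tangent bound, and `μ″(r) = G′(r) / r³` at a critical point.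
-/

open Set Filter Topology

theorem IsPreconnected.neg_of_neg_of_ne_zero {X : Type*} [TopologicalSpace X] {s : Set X}
    {f : X → ℝ} (hs : IsPreconnected s) (hf : ContinuousOn f s) (h0 : ∀ x ∈ s, f x ≠ 0)
    {a b : X} (ha : a ∈ s) (hb : b ∈ s) (hfa : f a < 0) : f b < 0 := by
  by_contra! hfb
  obtain ⟨x, hx, hfx⟩ := hs.intermediate_value ha hb hf ⟨hfa.le, hfb⟩
  exact h0 x hx hfx

noncomputable def muDerivNum (Λ M Q r : ℝ) : ℝ := 2 * M * r - 2 * Λ * r ^ 4 / 3 - 2 * Q ^ 2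

section Derivatives

variable (Λ M Q : ℝ)

theorem hasDerivAt_muDerivNum (r : ℝ) :
    HasDerivAt (muDerivNum Λ M Q) (2 * M - 8 * Λ * r ^ 3 / 3) r := by
  have h := (((hasDerivAt_id' r).const_mul (2 * M)).sub
    (((hasDerivAt_pow 4 r).const_mul (2 * Λ)).div_const 3)).sub_const (2 * Q ^ 2)
  exact h.congr_deriv (by norm_num; ring)

theorem hasDerivAt_mu {r : ℝ} (hr : r ≠ 0) :
    HasDerivAt (mu Λ M Q) (muDerivNum Λ M Q r / r ^ 3) r := by
  have h := (((hasDerivAt_inv hr).const_mul (2 * M)).const_sub 1).sub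
    (((hasDerivAt_pow 2 r).const_mul Λ).div_const 3) |>.add
    (((hasDerivAt_pow 2 r).inv (pow_ne_zero 2 hr)).const_mul (Q ^ 2))
  refine (h.congr_deriv ?_).congr_of_eventuallyEq (Eventually.of_forall fun x => ?_)
  · simp only [muDerivNum]
    field_simp
    ring
  · simp only [mu, div_eq_mul_inv, Pi.add_apply, Pi.sub_apply, Pi.inv_apply]

theorem continuousOn_mu : ContinuousOn (mu Λ M Q) (Ioi 0) := fun _ hr =>
  (hasDerivAt_mu Λ M Q (ne_of_gt hr)).continuousAt.continuousWithinAt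

theorem deriv_mu {r : ℝ} (hr : r ≠ 0) : deriv (mu Λ M Q) r = muDerivNum Λ M Q r / r ^ 3 :=
  (hasDerivAt_mu Λ M Q hr).deriv

theorem muDerivNum_eq_zero_of_deriv_mu_eq_zero {r : ℝ} (hr : r ≠ 0)
    (h : deriv (mu Λ M Q) r = 0) : muDerivNum Λ M Q r = 0 := by
  rwa [deriv_mu Λ M Q hr, div_eq_zero_iff, or_iff_left (pow_ne_zero 3 hr)] at h

theorem deriv_deriv_mu {r : ℝ} (hr : r ≠ 0) :
    deriv (deriv (mu Λ M Q)) r =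
      (r * (2 * M - 8 * Λ * r ^ 3 / 3) - 3 * muDerivNum Λ M Q r) / r ^ 4 := by
  have hderiv : deriv (mu Λ M Q) =ᶠ[𝓝 r] fun x => muDerivNum Λ M Q x / x ^ 3 := by
    filter_upwards [eventually_ne_nhds hr] with x hx
    exact deriv_mu Λ M Q hx
  rw [hderiv.deriv_eq,
    ((hasDerivAt_muDerivNum Λ M Q r).fun_div (hasDerivAt_pow 3 r) (pow_ne_zero 3 hr)).deriv]
  field_simp
  ring

end Derivatives

section Shape

variable {Λ : ℝ} (M Q : ℝ)

theorem tendsto_mu_atTop (hΛ : 0 < Λ) : Tendsto (mu Λ M Q) atTop atBot := by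
  have hsmall : Tendsto (fun r : ℝ => 1 - 2 * M / r + Q ^ 2 / r ^ 2) atTop (𝓝 (1 - 0 + 0)) :=
    ((tendsto_const_nhds.div_atTop tendsto_id).const_sub 1).add
      (tendsto_const_nhds.div_atTop (tendsto_pow_atTop two_ne_zero))
  have hlarge : Tendsto (fun r : ℝ => -(Λ * r ^ 2 / 3)) atTop atBot :=
    tendsto_neg_atTop_atBot.comp
      (((tendsto_pow_atTop two_ne_zero).const_mul_atTop hΛ).atTop_div_const three_pos)
  convert hsmall.add_atBot hlarge using 1
  funext r
  simp only [mu]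
  ring

theorem mu_neg_of_gt (hΛ : 0 < Λ) {rp : ℝ} (hrp : 0 < rp)
    (hnz : ∀ r, rp < r → mu Λ M Q r ≠ 0) {r : ℝ} (hr : rp < r) : mu Λ M Q r < 0 := by
  obtain ⟨R, hR, hRrp⟩ :=
    (((tendsto_mu_atTop M Q hΛ).eventually (eventually_lt_atBot 0)).and
      (eventually_gt_atTop rp)).exists
  exact isPreconnected_Ioi.neg_of_neg_of_ne_zero
    ((continuousOn_mu Λ M Q).mono fun x hx => hrp.trans hx) hnz hRrp hr hR

theorem mu_pos_of_nondegAt (hΛ : 0 < Λ) {rm rp : ℝ} (h : NondegAt Λ M Q rm rp) {r : ℝ}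
    (hr : r ∈ Ioo rm rp) : 0 < mu Λ M Q r := by
  obtain ⟨hrm, hlt, -, hμp, -, h'p, hnz, -⟩ := h
  by_contra! hle
  have hinner : ∀ s ∈ Ioo rm rp, mu Λ M Q s < 0 := fun s hs =>
    isPreconnected_Ioo.neg_of_neg_of_ne_zero
      ((continuousOn_mu Λ M Q).mono fun x hx => hrm.trans hx.1)
      (fun x hx => hnz x (Or.inl hx)) hr hs (hle.lt_of_ne (hnz r (Or.inl hr)))
  have houter : ∀ s, rp < s → mu Λ M Q s < 0 :=
    fun s => mu_neg_of_gt M Q hΛ (hrm.trans hlt) (fun x hx => hnz x (Or.inr hx))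
  have hmax : IsLocalMax (mu Λ M Q) rp := by
    filter_upwards [Ioo_mem_nhds hlt (lt_add_one rp)] with s hs
    rcases lt_trichotomy s rp with hsr | rfl | hsr
    · exact hμp ▸ (hinner s ⟨hs.1, hsr⟩).le
    · exact le_rfl
    · exact hμp ▸ (houter s hsr).le
  exact h'p hmax.deriv_eq_zero

end Shape

section Concavity

variable {Λ M Q : ℝ}

theorem muDerivNum_lt_tangent (hΛ : 0 < Λ) {x y : ℝ} (hxy : y ≠ x) :
    muDerivNum Λ M Q y < muDerivNum Λ M Q x + (2 * M - 8 * Λ * x ^ 3 / 3) * (y - x) := by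
  have hsq : 0 < (y - x) ^ 2 := by positivity [sub_ne_zero.mpr hxy]
  have hquad : 0 < (x + y) ^ 2 + 2 * x ^ 2 := by
    rcases eq_or_ne x 0 with rfl | hx
    · simpa using pow_pos (abs_pos.mpr hxy) 2
    · positivity
  have key : muDerivNum Λ M Q x + (2 * M - 8 * Λ * x ^ 3 / 3) * (y - x) - muDerivNum Λ M Q y =
      2 * Λ / 3 * ((y - x) ^ 2 * ((x + y) ^ 2 + 2 * x ^ 2)) := by
    simp only [muDerivNum]
    ring
  have : 0 < 2 * Λ / 3 * ((y - x) ^ 2 * ((x + y) ^ 2 + 2 * x ^ 2)) := by positivity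
  linarith

theorem muDerivNum_neg_of_eq_zero (hΛ : 0 < Λ) {x y : ℝ} (hx : muDerivNum Λ M Q x = 0)
    (hxy : y ≠ x) (hslope : (2 * M - 8 * Λ * x ^ 3 / 3) * (y - x) ≤ 0) :
    muDerivNum Λ M Q y < 0 := by
  linarith [muDerivNum_lt_tangent (M := M) (Q := Q) hΛ hxy]

theorem eq_of_muDerivNum_eq_zero (hΛ : 0 < Λ) {x y : ℝ}
    (hx : muDerivNum Λ M Q x = 0) (hy : muDerivNum Λ M Q y = 0)
    (hx' : 2 * M - 8 * Λ * x ^ 3 / 3 < 0) (hy' : 2 * M - 8 * Λ * y ^ 3 / 3 < 0) : x = y := by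
  by_contra hne
  rcases lt_or_gt_of_ne hne with hlt | hlt
  · exact (muDerivNum_neg_of_eq_zero hΛ hx hlt.ne' (by nlinarith)).ne hy
  · exact (muDerivNum_neg_of_eq_zero hΛ hy hlt.ne' (by nlinarith)).ne hx

theorem deriv_muDerivNum_neg_of_mu_le (hΛ : 0 < Λ) {a x : ℝ} (ha : 0 < a) (hax : a < x)
    (hx : muDerivNum Λ M Q x = 0) (hμ : mu Λ M Q a ≤ mu Λ M Q x) :
    2 * M - 8 * Λ * x ^ 3 / 3 < 0 := by
  by_contra! hslope
  have hanti : StrictAntiOn (mu Λ M Q) (Icc a x) := by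
    refine strictAntiOn_of_deriv_neg (convex_Icc a x)
      ((continuousOn_mu Λ M Q).mono fun y hy => ha.trans_le hy.1) fun y hy => ?_
    rw [interior_Icc] at hy
    have hy0 : 0 < y := ha.trans hy.1
    rw [deriv_mu Λ M Q hy0.ne']
    exact div_neg_of_neg_of_pos
      (muDerivNum_neg_of_eq_zero hΛ hx hy.2.ne (by nlinarith [hy.2])) (by positivity)
  exact (hanti (left_mem_Icc.mpr hax.le) (right_mem_Icc.mpr hax.le) hax).not_ge hμ

end Concavity

theorem mu_unique_nondeg_max_general (Λ M Q rm rp : ℝ) (hΛ : 0 < Λ)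
    (h : NondegAt Λ M Q rm rp) :
    ∃ rc ∈ Set.Ioo rm rp,
      deriv (mu Λ M Q) rc = 0 ∧
      deriv (deriv (mu Λ M Q)) rc < 0 ∧
      0 < mu Λ M Q rc ∧
      ∀ r ∈ Set.Ioo rm rp, deriv (mu Λ M Q) r = 0 → r = rc := by
  have hpos : ∀ r ∈ Ioo rm rp, 0 < mu Λ M Q r := fun r => mu_pos_of_nondegAt M Q hΛ h
  obtain ⟨hrm, hlt, hμm, hμp, -⟩ := h
  have hcrit : ∀ r ∈ Ioo rm rp, deriv (mu Λ M Q) r = 0 →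
      muDerivNum Λ M Q r = 0 ∧ 2 * M - 8 * Λ * r ^ 3 / 3 < 0 := fun r hr hd => by
    have hG := muDerivNum_eq_zero_of_deriv_mu_eq_zero Λ M Q (hrm.trans hr.1).ne' hd
    exact ⟨hG, deriv_muDerivNum_neg_of_mu_le hΛ hrm hr.1 hG (hμm ▸ (hpos r hr).le)⟩
  obtain ⟨rc, hrc, hdrc⟩ := exists_deriv_eq_zero hlt
    ((continuousOn_mu Λ M Q).mono fun x hx => hrm.trans_le hx.1) (hμm.trans hμp.symm)
  obtain ⟨hG, hG'⟩ := hcrit rc hrc hdrc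
  have hrc0 : 0 < rc := hrm.trans hrc.1
  refine ⟨rc, hrc, hdrc, ?_, hpos rc hrc, fun r hr hd => ?_⟩
  · rw [deriv_deriv_mu Λ M Q hrc0.ne', hG]
    exact div_neg_of_neg_of_pos (by nlinarith) (by positivity)
  · obtain ⟨hGr, hGr'⟩ := hcrit r hr hd
    exact eq_of_muDerivNum_eq_zero hΛ hGr hG hGr' hG'

/-- For non-degenerate RNdS parameters, `μ` has a unique and non-degenerate maximum
`r_c` in the exterior region `(r₋, r₊)`: it is the unique critical point of `μ` there,
and it satisfies `μ″(r_c) < 0` and `μ(r_c) > 0`. -/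
theorem mu_unique_nondeg_max (Λ M Q rm rp : ℝ) (hΛ : 0 < Λ) (hM : 0 < M)
    (h : NondegAt Λ M Q rm rp) :
    ∃ rc ∈ Set.Ioo rm rp,
      deriv (mu Λ M Q) rc = 0 ∧
      deriv (deriv (mu Λ M Q)) rc < 0 ∧
      0 < mu Λ M Q rc ∧
      ∀ r ∈ Set.Ioo rm rp, deriv (mu Λ M Q) r = 0 → r = rc :=
  mu_unique_nondeg_max_general Λ M Q rm rp hΛ h
end

section
/- Let I ⊆ ℝ be an open interval, r_c ∈ I, and let f : I → ℝ be infinitely differentiable with f(r_c) > 0, f(r) < f(r_c) for all r ∈ I with r ≠ r_c, and f″(r_c) ≠ 0 (hence f″(r_c) < 0). Define ν : I → ℝ by ν(r) = √(1 − f(r)/f(r_c)) for r ≤ r_c and ν(r) = −√(1 − f(r)/f(r_c)) for r ≥ r_c. Then ν is infinitely differentiable on I, satisfies ν(r)² = 1 − f(r)/f(r_c) for all r ∈ I, and ν′(r_c) = −√(−f″(r_c)/(2 f(r_c))). -/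
/-!
Put `g = 1 - f / f r_c`. It vanishes to second order at `r_c` (a maximum of `f`), so Hadamard's
lemma `g x = (x - a) * ∫₀¹ g' (a + t (x - a)) dt`, applied twice, gives `g r = (r - r_c)² h r`
with `h` smooth and `2 h r_c = g'' r_c = -f'' r_c / f r_c`. Strict maximality makes `h > 0` away
from `r_c`, so `h r_c ≥ 0` by continuity, and `f'' r_c ≠ 0` makes it positive. Then `h > 0` on
`I` and `ν r = -(r - r_c) √(h r)` is smooth, with `ν' r_c = -√(h r_c)`.
-/

/-- The function `ν`: `ν(r) = √(1 − f(r)/f(r_c))` for `r ≤ r_c` and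
`ν(r) = −√(1 − f(r)/f(r_c))` for `r ≥ r_c`. -/
noncomputable def nuFun (f : ℝ → ℝ) (rc r : ℝ) : ℝ :=
  if r ≤ rc then Real.sqrt (1 - f r / f rc) else -Real.sqrt (1 - f r / f rc)

open Set Metric Filter Topology
open scoped ContDiff Interval

section Hadamard

variable {s : Set ℝ} {a : ℝ}

lemma ContDiffOn.hasDerivAt_deriv {G : ℝ → ℝ} (hG : ContDiffOn ℝ ∞ G s) (hs : IsOpen s)
    {y : ℝ} (hy : y ∈ s) : HasDerivAt G (deriv G y) y :=
  ((hG.contDiffAt (hs.mem_nhds hy)).differentiableAt (by simp)).hasDerivAt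

lemma ContDiffOn.deriv_of_isOpen_infty {G : ℝ → ℝ} (hG : ContDiffOn ℝ ∞ G s)
    (hs : IsOpen s) : ContDiffOn ℝ ∞ (deriv G) s :=
  hG.deriv_of_isOpen hs le_rfl

lemma Convex.add_mul_sub_mem (hconv : Convex ℝ s) (ha : a ∈ s) {x t : ℝ} (hx : x ∈ s)
    (ht : t ∈ Icc (0 : ℝ) 1) : a + t * (x - a) ∈ s := by
  simpa only [smul_eq_mul] using hconv.add_smul_sub_mem ha hx ht

lemma continuousOn_pow_mul_comp_segment (n : ℕ) (hconv : Convex ℝ s) (ha : a ∈ s)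
    {G : ℝ → ℝ} (hG : ContinuousOn G s) {x : ℝ} (hx : x ∈ s) :
    ContinuousOn (fun t => t ^ n * G (a + t * (x - a))) (Icc 0 1) :=
  (continuousOn_pow n).mul <| hG.comp (by fun_prop) fun _ ht => hconv.add_mul_sub_mem ha hx ht

lemma ContinuousOn.aestronglyMeasurable_uIoc_zero_one {φ : ℝ → ℝ}
    (hφ : ContinuousOn φ (Icc 0 1)) :
    MeasureTheory.AEStronglyMeasurable φ (MeasureTheory.volume.restrict (Ι 0 1)) := by
  rw [uIoc_of_le zero_le_one]
  exact (hφ.mono Ioc_subset_Icc_self).aestronglyMeasurable measurableSet_Ioc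

lemma hasDerivAt_integral_pow_mul_comp_segment (n : ℕ) (hs : IsOpen s) (hconv : Convex ℝ s)
    (ha : a ∈ s) {G G' : ℝ → ℝ} (hG : ∀ y ∈ s, HasDerivAt G (G' y) y)
    (hG' : ContinuousOn G' s) {x₀ : ℝ} (hx₀ : x₀ ∈ s) :
    HasDerivAt (fun x => ∫ t in (0 : ℝ)..1, t ^ n * G (a + t * (x - a)))
      (∫ t in (0 : ℝ)..1, t ^ (n + 1) * G' (a + t * (x₀ - a))) x₀ := by
  have hGc : ContinuousOn G s := fun y hy => (hG y hy).continuousAt.continuousWithinAt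
  obtain ⟨ε, hε, hball⟩ := nhds_basis_closedBall.mem_iff.1 (hs.mem_nhds hx₀)
  -- `K ⊆ s` is compact and contains every segment from `a` to a point of `ball x₀ ε`,
  -- so a bound for `G'` on `K` dominates all the integrands.
  set K := Icc (min a (x₀ - ε)) (max a (x₀ + ε))
  have hKs : K ⊆ s := by
    have hlo : x₀ - ε ∈ s := hball (by simp [abs_of_pos hε])
    have hhi : x₀ + ε ∈ s := hball (by simp [abs_of_pos hε])
    refine hconv.ordConnected.out ?_ ?_
    · rcases min_choice a (x₀ - ε) with h | h <;> rwa [h]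
    · rcases max_choice a (x₀ + ε) with h | h <;> rwa [h]
  have hsegK : ∀ x ∈ ball x₀ ε, ∀ t ∈ Icc (0 : ℝ) 1, a + t * (x - a) ∈ K := by
    intro x hx t ht
    rw [Real.ball_eq_Ioo] at hx
    refine (convex_Icc _ _).add_mul_sub_mem ⟨min_le_left _ _, le_max_left _ _⟩ ?_ ht
    exact ⟨(min_le_right _ _).trans hx.1.le, hx.2.le.trans (le_max_right _ _)⟩
  obtain ⟨C, hC⟩ := isCompact_Icc.exists_bound_of_continuousOn (hG'.mono hKs)
  refine (intervalIntegral.hasDerivAt_integral_of_dominated_loc_of_deriv_le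
    (F := fun x t => t ^ n * G (a + t * (x - a)))
    (F' := fun x t => t ^ (n + 1) * G' (a + t * (x - a))) (bound := fun _ => C)
    (ball_mem_nhds x₀ hε) ?_ ?_ ?_ ?_ intervalIntegrable_const ?_).2
  · filter_upwards [hs.mem_nhds hx₀] with x hx
    exact (continuousOn_pow_mul_comp_segment n hconv ha hGc hx).aestronglyMeasurable_uIoc_zero_one
  · exact (continuousOn_pow_mul_comp_segment n hconv ha hGc hx₀).intervalIntegrable_of_Icc
      zero_le_one
  · exact ContinuousOn.aestronglyMeasurable_uIoc_zero_one
      (continuousOn_pow_mul_comp_segment _ hconv ha hG' hx₀)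
  · refine Eventually.of_forall fun t ht x hx => ?_
    rw [uIoc_of_le zero_le_one] at ht
    have ht' : t ∈ Icc (0 : ℝ) 1 := Ioc_subset_Icc_self ht
    rw [norm_mul, norm_pow, Real.norm_of_nonneg ht'.1]
    exact (mul_le_of_le_one_left (norm_nonneg _) (pow_le_one₀ ht'.1 ht'.2)).trans
      (hC _ (hsegK x hx t ht'))
  · refine Eventually.of_forall fun t ht x hx => ?_
    rw [uIoc_of_le zero_le_one] at ht
    have hy := hKs (hsegK x hx t (Ioc_subset_Icc_self ht))
    have hseg : HasDerivAt (fun x => a + t * (x - a)) t x := by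
      simpa using ((hasDerivAt_id x).sub_const a).const_mul t |>.const_add a
    exact (((hG _ hy).comp x hseg).const_mul (t ^ n)).congr_deriv (by ring)

-- Differentiating in `x` trades `t ^ n * G` for `t ^ (n + 1) * deriv G`, so the family
-- indexed by `n` is closed under differentiation.
lemma contDiffOn_integral_pow_mul_comp_segment (hs : IsOpen s) (hconv : Convex ℝ s) (ha : a ∈ s)
    {G : ℝ → ℝ} (hG : ContDiffOn ℝ ∞ G s) (n : ℕ) :
    ContDiffOn ℝ ∞ (fun x => ∫ t in (0 : ℝ)..1, t ^ n * G (a + t * (x - a))) s := by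
  have hderiv : ∀ {G : ℝ → ℝ}, ContDiffOn ℝ ∞ G s → ∀ n : ℕ, ∀ x ∈ s,
      HasDerivAt (fun x => ∫ t in (0 : ℝ)..1, t ^ n * G (a + t * (x - a)))
        (∫ t in (0 : ℝ)..1, t ^ (n + 1) * deriv G (a + t * (x - a))) x :=
    fun hG n x hx => hasDerivAt_integral_pow_mul_comp_segment n hs hconv ha
      (fun y hy => hG.hasDerivAt_deriv hs hy) (hG.deriv_of_isOpen_infty hs).continuousOn hx
  suffices ∀ m : ℕ, ∀ {G : ℝ → ℝ}, ContDiffOn ℝ ∞ G s → ∀ n : ℕ,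
      ContDiffOn ℝ m (fun x => ∫ t in (0 : ℝ)..1, t ^ n * G (a + t * (x - a))) s from
    contDiffOn_infty.2 fun m => this m hG n
  intro m
  induction m with
  | zero =>
    exact fun hG n => contDiffOn_zero.2 fun x hx =>
      (hderiv hG n x hx).continuousAt.continuousWithinAt
  | succ m ih =>
    intro G hG n
    rw [Nat.cast_succ, contDiffOn_succ_iff_deriv_of_isOpen hs]
    refine ⟨fun x hx => (hderiv hG n x hx).differentiableAt.differentiableWithinAt,
      by simp, ?_⟩
    exact (ih (hG.deriv_of_isOpen_infty hs) (n + 1)).congr fun x hx => (hderiv hG n x hx).deriv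

lemma integral_deriv_comp_segment (hs : IsOpen s) (hconv : Convex ℝ s) (ha : a ∈ s)
    {g : ℝ → ℝ} (hg : ContDiffOn ℝ ∞ g s) {x : ℝ} (hx : x ∈ s) :
    (x - a) * ∫ t in (0 : ℝ)..1, deriv g (a + t * (x - a)) = g x - g a := by
  rw [← intervalIntegral.integral_const_mul]
  have hseg : ∀ t ∈ uIcc (0 : ℝ) 1, a + t * (x - a) ∈ s := fun t ht =>
    hconv.add_mul_sub_mem ha hx (by rwa [uIcc_of_le zero_le_one] at ht)
  have hderiv : ∀ t ∈ uIcc (0 : ℝ) 1, HasDerivAt (fun t => g (a + t * (x - a)))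
      ((x - a) * deriv g (a + t * (x - a))) t := by
    intro t ht
    have hline : HasDerivAt (fun t => a + t * (x - a)) (x - a) t := by
      simpa using ((hasDerivAt_id t).mul_const (x - a)).const_add a
    exact ((hg.hasDerivAt_deriv hs (hseg t ht)).comp t hline).congr_deriv (mul_comm _ _)
  have hcont : ContinuousOn (fun t => (x - a) * deriv g (a + t * (x - a))) (uIcc 0 1) :=
    continuousOn_const.mul <|
      (hg.deriv_of_isOpen_infty hs).continuousOn.comp (by fun_prop) hseg
  rw [intervalIntegral.integral_eq_sub_of_hasDerivAt hderiv hcont.intervalIntegrable]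
  simp

theorem exists_eq_sub_mul_of_contDiffOn (hs : IsOpen s) (hconv : Convex ℝ s) (ha : a ∈ s)
    {g : ℝ → ℝ} (hg : ContDiffOn ℝ ∞ g s) (hga : g a = 0) :
    ∃ h : ℝ → ℝ, ContDiffOn ℝ ∞ h s ∧ (∀ x ∈ s, g x = (x - a) * h x) ∧
      h a = deriv g a := by
  refine ⟨fun x => ∫ t in (0 : ℝ)..1, deriv g (a + t * (x - a)), ?_, fun x hx => ?_,
    by simp⟩
  · simpa only [pow_zero, one_mul] using
      contDiffOn_integral_pow_mul_comp_segment hs hconv ha (hg.deriv_of_isOpen_infty hs) 0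
  · rw [integral_deriv_comp_segment hs hconv ha hg hx, hga, sub_zero]

lemma deriv_deriv_sub_sq_mul (hs : IsOpen s) (ha : a ∈ s) {h : ℝ → ℝ}
    (hh : ContDiffOn ℝ ∞ h s) :
    deriv (deriv fun x => (x - a) ^ 2 * h x) a = 2 * h a := by
  have hh' := hh.deriv_of_isOpen_infty hs
  have hderiv : ∀ x ∈ s, HasDerivAt (fun x => (x - a) ^ 2 * h x)
      (2 * (x - a) * h x + (x - a) ^ 2 * deriv h x) x := fun x hx => by
    simpa using (((hasDerivAt_id x).sub_const a).fun_pow 2).fun_mul (hh.hasDerivAt_deriv hs hx)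
  have hderiv' : HasDerivAt (fun x => 2 * (x - a) * h x + (x - a) ^ 2 * deriv h x)
      (2 * h a) a := by
    have := ((((hasDerivAt_id a).sub_const a).const_mul 2).fun_mul
      (hh.hasDerivAt_deriv hs ha)).fun_add
      ((((hasDerivAt_id a).sub_const a).fun_pow 2).fun_mul (hh'.hasDerivAt_deriv hs ha))
    simpa using this
  rw [(eventuallyEq_of_mem (hs.mem_nhds ha) fun x hx => (hderiv x hx).deriv).deriv_eq]
  exact hderiv'.deriv

theorem exists_eq_sub_sq_mul_of_contDiffOn (hs : IsOpen s) (hconv : Convex ℝ s) (ha : a ∈ s)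
    {g : ℝ → ℝ} (hg : ContDiffOn ℝ ∞ g s) (hga : g a = 0) (hg'a : deriv g a = 0) :
    ∃ h : ℝ → ℝ, ContDiffOn ℝ ∞ h s ∧ (∀ x ∈ s, g x = (x - a) ^ 2 * h x) ∧
      deriv (deriv g) a = 2 * h a := by
  obtain ⟨h₁, hh₁, hgh₁, hh₁a⟩ := exists_eq_sub_mul_of_contDiffOn hs hconv ha hg hga
  obtain ⟨h, hh, hh₁h, -⟩ :=
    exists_eq_sub_mul_of_contDiffOn hs hconv ha hh₁ (hh₁a.trans hg'a)
  have hgh : ∀ x ∈ s, g x = (x - a) ^ 2 * h x := fun x hx => by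
    rw [hgh₁ x hx, hh₁h x hx]; ring
  refine ⟨h, hh, hgh, ?_⟩
  rw [(eventuallyEq_of_mem (hs.mem_nhds ha) hgh).deriv.deriv_eq]
  exact deriv_deriv_sub_sq_mul hs ha hh

end Hadamard

lemma nuFun_eq_neg_sub_mul_sqrt {f h : ℝ → ℝ} {rc r : ℝ}
    (hr : 1 - f r / f rc = (r - rc) ^ 2 * h r) :
    nuFun f rc r = -((r - rc) * √(h r)) := by
  have hsqrt : √(1 - f r / f rc) = |r - rc| * √(h r) := by
    rw [hr, Real.sqrt_mul (sq_nonneg _), Real.sqrt_sq_eq_abs]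
  unfold nuFun
  split_ifs with hle
  · rw [hsqrt, abs_of_nonpos (sub_nonpos.2 hle)]; ring
  · rw [hsqrt, abs_of_pos (sub_pos.2 (not_le.1 hle))]

lemma ContinuousAt.nonneg_of_pos_of_ne {h : ℝ → ℝ} {a : ℝ} {s : Set ℝ} (hs : s ∈ 𝓝 a)
    (hh : ContinuousAt h a) (hpos : ∀ x ∈ s, x ≠ a → 0 < h x) : 0 ≤ h a :=
  ge_of_tendsto (hh.mono_left (nhdsWithin_le_nhds (s := {a}ᶜ))) <| by
    filter_upwards [self_mem_nhdsWithin, mem_nhdsWithin_of_mem_nhds hs] with x hxa hx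
    exact (hpos x hx hxa).le

theorem exists_one_sub_div_eq_sub_sq_mul {I : Set ℝ} (hIopen : IsOpen I) (hIconn : I.OrdConnected)
    {f : ℝ → ℝ} {rc : ℝ} (hrc : rc ∈ I) (hf : ContDiffOn ℝ ∞ f I) (hpos : 0 < f rc)
    (hmax : ∀ r ∈ I, r ≠ rc → f r < f rc) (hf'' : deriv (deriv f) rc ≠ 0) :
    ∃ h : ℝ → ℝ, ContDiffOn ℝ ∞ h I ∧ (∀ r ∈ I, 0 < h r) ∧
      (∀ r ∈ I, 1 - f r / f rc = (r - rc) ^ 2 * h r) ∧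
      h rc = -deriv (deriv f) rc / (2 * f rc) := by
  have hlocmax : IsLocalMax f rc :=
    IsMaxOn.isLocalMax (fun r hr => (eq_or_ne r rc).elim (fun h => (congrArg f h).le)
      fun h => (hmax r hr h).le) (hIopen.mem_nhds hrc)
  have hderiv_g : deriv (fun r => 1 - f r / f rc) = fun r => -(deriv f r / f rc) := by
    simp only [deriv_const_sub', deriv_div_const]
  obtain ⟨h, hh, hgh, hg''⟩ := exists_eq_sub_sq_mul_of_contDiffOn
    (g := fun r => 1 - f r / f rc) hIopen (convex_iff_ordConnected.2 hIconn) hrc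
    (contDiffOn_const.sub (hf.div_const _)) (by simp only [div_self hpos.ne', sub_self])
    (by simp only [hderiv_g, hlocmax.deriv_eq_zero, zero_div, neg_zero])
  have hh_rc : h rc = -deriv (deriv f) rc / (2 * f rc) := by
    rw [hderiv_g, deriv.fun_neg, deriv_div_const] at hg''
    field_simp at hg'' ⊢; linarith
  have hpos_off : ∀ r ∈ I, r ≠ rc → 0 < h r := fun r hr hne => by
    have hg : 0 < 1 - f r / f rc := sub_pos.2 ((div_lt_one hpos).2 (hmax r hr hne))
    rw [hgh r hr] at hg
    exact pos_of_mul_pos_right hg (sq_nonneg _)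
  have hh_rc_pos : 0 < h rc :=
    ((hh.continuousOn.continuousAt (hIopen.mem_nhds hrc)).nonneg_of_pos_of_ne
      (hIopen.mem_nhds hrc) hpos_off).lt_of_ne'
      (by rw [hh_rc]; exact div_ne_zero (neg_ne_zero.2 hf'') (by positivity))
  exact ⟨h, hh, fun r hr => (eq_or_ne r rc).elim (· ▸ hh_rc_pos) (hpos_off r hr), hgh, hh_rc⟩

/-- If `f` is smooth on an open interval `I`, attains a strict global maximum `f(r_c) > 0`
on `I` at `r_c ∈ I` with `f″(r_c) ≠ 0` (hence `f″(r_c) < 0`), then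
`ν(r) = ∓√(1 − f(r)/f(r_c))` (for `±(r − r_c) ≥ 0`) is smooth on `I`, satisfies
`ν² = 1 − f/f(r_c)` on `I`, and `ν′(r_c) = −√(−f″(r_c)/(2 f(r_c)))`. -/
theorem nu_smooth (I : Set ℝ) (hIopen : IsOpen I) (hIconn : I.OrdConnected)
    (f : ℝ → ℝ) (rc : ℝ) (hrc : rc ∈ I)
    (hf : ContDiffOn ℝ (⊤ : ℕ∞) f I)
    (hpos : 0 < f rc)
    (hmax : ∀ r ∈ I, r ≠ rc → f r < f rc)
    (hf'' : deriv (deriv f) rc ≠ 0) :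
    deriv (deriv f) rc < 0 ∧
    ContDiffOn ℝ (⊤ : ℕ∞) (nuFun f rc) I ∧
    (∀ r ∈ I, nuFun f rc r ^ 2 = 1 - f r / f rc) ∧
    deriv (nuFun f rc) rc = -Real.sqrt (-(deriv (deriv f) rc) / (2 * f rc)) := by
  obtain ⟨h, hh, hh_pos, hgh, hh_rc⟩ :=
    exists_one_sub_div_eq_sub_sq_mul hIopen hIconn hrc hf hpos hmax hf''
  have hν : EqOn (nuFun f rc) (fun r => -((r - rc) * √(h r))) I := fun r hr =>
    nuFun_eq_neg_sub_mul_sqrt (hgh r hr)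
  refine ⟨?_, ?_, fun r hr => ?_, ?_⟩
  · have := hh_pos rc hrc
    rw [hh_rc, lt_div_iff₀ (by positivity)] at this
    linarith
  · exact ((contDiffOn_id.sub contDiffOn_const).mul
      (hh.sqrt fun r hr => (hh_pos r hr).ne')).neg.congr hν
  · rw [hν hr, neg_sq, mul_pow, Real.sq_sqrt (hh_pos r hr).le, ← hgh r hr]
  · have hsqrt := (hh.contDiffAt (hIopen.mem_nhds hrc)).sqrt (hh_pos rc hrc).ne'
    have := (((hasDerivAt_id' rc).sub_const rc).fun_mul
      ((hsqrt.differentiableAt (by simp)).hasDerivAt)).fun_neg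
    rw [(eventuallyEq_of_mem (hIopen.mem_nhds hrc) hν).deriv_eq, this.deriv, hh_rc]
    simp
end

section
/- Assume the RNdS parameters (Λ, M, Q) (with Λ > 0, M > 0) are non-degenerate, with horizon radii r₋ < r₊. Then for every real k with k² ≥ 2 and every r ∈ [r₋, r₊], one has (k² − 2) + 6M/r − 4Q²/r² > 0. (In the paper's notation, H = m + 3x − 4z > 0 on [r₋, r₊], where m = k² − 2, x = 2M/r, z = Q²/r².) -/
lemma mu_hasDerivAt (Λ M Q : ℝ) {r : ℝ} (hr : r ≠ 0) :
    HasDerivAt (mu Λ M Q) (2*M/r^2 - 2*Λ*r/3 - 2*Q^2/r^3) r := by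
  have hx2 : HasDerivAt (fun x : ℝ => x^2) (2*r) r := by
    simpa using hasDerivAt_pow 2 r
  have hinv : HasDerivAt (fun x : ℝ => x⁻¹) (-(r^2)⁻¹) r := hasDerivAt_inv hr
  have hinv2 : HasDerivAt (fun x : ℝ => (x^2)⁻¹) (-(2*r)/(r^2)^2) r :=
    hx2.inv (pow_ne_zero 2 hr)
  have hg : HasDerivAt (fun x : ℝ => 1 - 2*M*x⁻¹ - Λ/3*x^2 + Q^2*(x^2)⁻¹)
      (0 - 2*M*(-(r^2)⁻¹) - Λ/3*(2*r) + Q^2*(-(2*r)/(r^2)^2)) r :=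
    (((hasDerivAt_const r (1:ℝ)).sub (hinv.const_mul (2*M))).sub
      (hx2.const_mul (Λ/3))).add (hinv2.const_mul (Q^2))
  have hfun : mu Λ M Q = fun x : ℝ => 1 - 2*M*x⁻¹ - Λ/3*x^2 + Q^2*(x^2)⁻¹ := by
    funext x; simp only [mu]; ring
  rw [hfun]
  convert hg using 1
  field_simp
  ring

lemma ivt_zero {f : ℝ → ℝ} {a b : ℝ} (hab : a ≤ b)
    (hc : ContinuousOn f (Set.Icc a b)) (ha : 0 < f a) (hb : f b < 0) :
    ∃ t ∈ Set.Icc a b, f t = 0 := by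
  have := intermediate_value_Icc' hab hc (Set.mem_Icc.mpr ⟨le_of_lt hb, le_of_lt ha⟩)
  obtain ⟨t, ht, h0⟩ := this
  exact ⟨t, ht, h0⟩

lemma ivt_zero' {f : ℝ → ℝ} {a b : ℝ} (hab : a ≤ b)
    (hc : ContinuousOn f (Set.Icc a b)) (ha : f a < 0) (hb : 0 < f b) :
    ∃ t ∈ Set.Icc a b, f t = 0 := by
  have := intermediate_value_Icc hab hc (Set.mem_Icc.mpr ⟨le_of_lt ha, le_of_lt hb⟩)
  obtain ⟨t, ht, h0⟩ := this
  exact ⟨t, ht, h0⟩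

/-- Positivity of `H = (k² − 2) + 6M/r − 4Q²/r²` on `[r₋, r₊]` for every `k` with
`k² ≥ 2`, for non-degenerate RNdS parameters. -/
theorem H_positive (Λ M Q rm rp : ℝ) (hΛ : 0 < Λ) (hM : 0 < M)
    (h : NondegAt Λ M Q rm rp) :
    ∀ k : ℝ, 2 ≤ k ^ 2 → ∀ r ∈ Set.Icc rm rp,
      0 < (k ^ 2 - 2) + 6 * M / r - 4 * Q ^ 2 / r ^ 2 := by
  obtain ⟨hrm, hrmrp, hμm, hμp, hdm, hdp, hne, -⟩ := h
  have hrp : 0 < rp := hrm.trans hrmrp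
  -- continuity on positive intervals
  have hcont : ∀ a b : ℝ, 0 < a → ContinuousOn (mu Λ M Q) (Set.Icc a b) := by
    intro a b ha x hx
    exact ((mu_hasDerivAt Λ M Q (ne_of_gt (lt_of_lt_of_le ha hx.1))).continuousAt).continuousWithinAt
  -- a point beyond rp where mu is negative
  set A : ℝ := Real.sqrt (3*(1+Q^2)/Λ) with hAdef
  set r₀ : ℝ := max (rp+1) (A+1) with hr₀def
  have hA0 : 0 ≤ A := Real.sqrt_nonneg _
  have hr₀rp : rp < r₀ := lt_of_lt_of_le (by linarith) (le_max_left _ _)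
  have hr₀1 : 1 ≤ r₀ := le_trans (by linarith) (le_max_left _ _)
  have hr₀A : A < r₀ := lt_of_lt_of_le (by linarith) (le_max_right _ _)
  have hr₀0 : 0 < r₀ := by linarith
  have hAsq : A^2 = 3*(1+Q^2)/Λ := Real.sq_sqrt (by positivity)
  have hr₀sq : 3*(1+Q^2)/Λ < r₀^2 := by
    rw [← hAsq]
    exact pow_lt_pow_left₀ hr₀A hA0 (by norm_num)
  have hμr₀ : mu Λ M Q r₀ < 0 := by
    have h1 : 1 + Q^2 < Λ * r₀^2 / 3 := by
      rw [div_lt_iff₀ hΛ] at hr₀sq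
      nlinarith
    have h2 : Q^2 / r₀^2 ≤ Q^2 := div_le_self (sq_nonneg Q) (by nlinarith)
    have h3 : 0 < 2 * M / r₀ := by positivity
    simp only [mu]
    linarith
  -- mu is negative on (rp, r₀]
  have hneg : ∀ s, rp < s → s ≤ r₀ → mu Λ M Q s < 0 := by
    intro s hs hs'
    rcases lt_trichotomy (mu Λ M Q s) 0 with hc | hc | hc
    · exact hc
    · exact absurd hc (hne s (Or.inr hs))
    · obtain ⟨t, ht, h0⟩ := ivt_zero hs' (hcont s r₀ (hrp.trans hs)) hc hμr₀
      exact absurd h0 (hne t (Or.inr (lt_of_lt_of_le hs ht.1)))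
  -- sign propagation on (rm, rp)
  have hprop : ∀ a ∈ Set.Ioo rm rp, ∀ b ∈ Set.Ioo rm rp,
      mu Λ M Q a < 0 → mu Λ M Q b < 0 := by
    intro a ha b hb hμa
    rcases lt_trichotomy (mu Λ M Q b) 0 with hc | hc | hc
    · exact hc
    · exact absurd hc (hne b (Or.inl ⟨hb.1, hb.2⟩))
    · rcases le_total a b with hab | hab
      · obtain ⟨t, ht, h0⟩ := ivt_zero' hab (hcont a b (hrm.trans ha.1)) hμa hc
        exact absurd h0 (hne t (Or.inl ⟨lt_of_lt_of_le ha.1 ht.1, lt_of_le_of_lt ht.2 hb.2⟩))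
      · obtain ⟨t, ht, h0⟩ := ivt_zero hab (hcont b a (hrm.trans hb.1)) hc hμa
        exact absurd h0 (hne t (Or.inl ⟨lt_of_lt_of_le hb.1 ht.1, lt_of_le_of_lt ht.2 ha.2⟩))
  -- mu is positive on (rm, rp)
  have hpos : ∀ s ∈ Set.Ioo rm rp, 0 < mu Λ M Q s := by
    intro s hs
    rcases lt_trichotomy (mu Λ M Q s) 0 with hc | hc | hc
    · -- mu negative on all of (rm, rp): then rp is a local max, contradicting μ'(rp) ≠ 0
      exfalso
      have hmax : IsLocalMax (mu Λ M Q) rp := by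
        have hmem : Set.Ioo rm r₀ ∈ nhds rp := Ioo_mem_nhds hrmrp hr₀rp
        refine Filter.eventually_of_mem hmem ?_
        intro x hx
        rw [hμp]
        rcases lt_trichotomy x rp with hx' | hx' | hx'
        · exact le_of_lt (hprop s hs x ⟨hx.1, hx'⟩ hc)
        · rw [hx', hμp]
        · exact le_of_lt (hneg x hx' (le_of_lt hx.2))
      exact hdp hmax.deriv_eq_zero
    · exact absurd hc (hne s (Or.inl ⟨hs.1, hs.2⟩))
    · exact hc
  -- derivative of mu at rm is positive
  have hd : HasDerivAt (mu Λ M Q) (2*M/rm^2 - 2*Λ*rm/3 - 2*Q^2/rm^3) rm :=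
    mu_hasDerivAt Λ M Q hrm.ne'
  have hslope : Filter.Tendsto (slope (mu Λ M Q) rm) (nhdsWithin rm {rm}ᶜ)
      (nhds (2*M/rm^2 - 2*Λ*rm/3 - 2*Q^2/rm^3)) := hasDerivAt_iff_tendsto_slope.mp hd
  have hslope' : Filter.Tendsto (slope (mu Λ M Q) rm) (nhdsWithin rm (Set.Ioi rm))
      (nhds (2*M/rm^2 - 2*Λ*rm/3 - 2*Q^2/rm^3)) :=
    hslope.mono_left (nhdsWithin_mono rm (fun x hx => Set.mem_compl_singleton_iff.mpr (ne_of_gt hx)))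
  have hDpos0 : 0 ≤ 2*M/rm^2 - 2*Λ*rm/3 - 2*Q^2/rm^3 := by
    refine ge_of_tendsto hslope' ?_
    filter_upwards [Ioo_mem_nhdsGT_of_mem (Set.mem_Ico.mpr ⟨le_refl rm, hrmrp⟩)] with x hx
    rw [slope_def_field, hμm, sub_zero]
    exact div_nonneg (le_of_lt (hpos x hx)) (by linarith [hx.1])
  have hDne : 2*M/rm^2 - 2*Λ*rm/3 - 2*Q^2/rm^3 ≠ 0 := hd.deriv ▸ hdm
  have hDpos : 0 < 2*M/rm^2 - 2*Λ*rm/3 - 2*Q^2/rm^3 := lt_of_le_of_ne hDpos0 (Ne.symm hDne)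
  -- key inequality: 2 Q² < 3 M rm
  have hrmne : rm ≠ 0 := hrm.ne'
  have hμm' : rm^2 - 2*M*rm - Λ*rm^4/3 + Q^2 = 0 := by
    have h1 : rm^2 - 2*M*rm - Λ*rm^4/3 + Q^2 = (mu Λ M Q rm) * rm^2 := by
      simp only [mu]; field_simp
    rw [h1, hμm, zero_mul]
  have hD' : 0 < M*rm - Λ*rm^4/3 - Q^2 := by
    have h1 : 0 < (2*M/rm^2 - 2*Λ*rm/3 - 2*Q^2/rm^3) * (rm^3/2) :=
      mul_pos hDpos (by positivity)
    have h2 : (2*M/rm^2 - 2*Λ*rm/3 - 2*Q^2/rm^3) * (rm^3/2) = M*rm - Λ*rm^4/3 - Q^2 := by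
      field_simp
    linarith [h2 ▸ h1]
  have key : 2*Q^2 < 3*M*rm := by nlinarith [sq_nonneg rm, hrm]
  -- conclude
  intro k hk r hr
  have hrpos : 0 < r := lt_of_lt_of_le hrm hr.1
  have hnum : 0 < 6*M*r - 4*Q^2 := by nlinarith [hr.1, hM]
  have heq : 6*M/r - 4*Q^2/r^2 = (6*M*r - 4*Q^2)/r^2 := by
    field_simp
  have hfrac : 0 < (6*M*r - 4*Q^2)/r^2 := div_pos hnum (by positivity)
  have : 0 < 6*M/r - 4*Q^2/r^2 := heq ▸ hfrac
  linarith
end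

section
/- Assume the RNdS parameters (Λ, M, Q) (with Λ > 0, M > 0) are non-degenerate, with horizon radii r₋ < r₊. Let k be real with k² ≥ 2 and set c̃ := 3M + √(9M² + 4(k² − 2)Q²) and c₊ := −Q(k² − 2)/(2c̃). Then for every r ∈ [r₋, r₊] one has H₊(r) := 1 − 4Q²/(c̃ r) > 0 and H₋(r) := (k² − 2) + (6M/r)(1 − 4Q c₊/(3M)) > 0. -/
/-!
`H₋ > 0` is immediate: `c₊` has the sign of `-Q`, so `1 - 4Qc₊/(3M) ≥ 1`. For `H₊`, since
`c̃ ≥ 6M` it suffices that `Q² < M r₋`. Clear denominators with `G(r) = r² μ(r)`. Beyond `r₊`,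
`G` has no root and is eventually negative, so it is negative there; as `r₊` is a simple root,
`G > 0` just left of `r₊`, hence on all of `(r₋, r₊)`. Therefore `G'(r₋) ≥ 0`, and eliminating
`Λ` between `G(r₋) = 0` and `G'(r₋) ≥ 0` gives `Q² < M r₋`.
-/

open Set Filter Topology

section SignLemmas

variable {f : ℝ → ℝ} {f' a : ℝ} {s : Set ℝ}

theorem IsPreconnected.pos_of_ne_zero (hs : IsPreconnected s) (hf : ContinuousOn f s)
    (hne : ∀ x ∈ s, f x ≠ 0) (ha : a ∈ s) (hfa : 0 < f a) : ∀ x ∈ s, 0 < f x := by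
  intro x hx
  by_contra! hfx
  obtain ⟨y, hy, hfy⟩ := hs.intermediate_value₂ hx ha hf continuousOn_const hfx hfa.le
  exact hne y hy hfy

theorem IsPreconnected.neg_of_ne_zero (hs : IsPreconnected s) (hf : ContinuousOn f s)
    (hne : ∀ x ∈ s, f x ≠ 0) (ha : a ∈ s) (hfa : f a < 0) : ∀ x ∈ s, f x < 0 := by
  simpa using hs.pos_of_ne_zero (f := -f) hf.neg (by simpa using hne) ha (by simpa using hfa)

theorem HasDerivAt.nonneg_of_eventually_nonneg_right (hf : HasDerivAt f f' a) (ha : f a = 0)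
    (h : ∀ᶠ x in 𝓝[>] a, 0 ≤ f x) : 0 ≤ f' := by
  refine ge_of_tendsto (hasDerivAt_iff_tendsto_slope.mp hf |>.mono_left (nhdsGT_le_nhdsNE a)) ?_
  filter_upwards [h, self_mem_nhdsWithin] with x hfx hx
  rw [slope_def_field, ha, sub_zero]
  exact div_nonneg hfx (sub_nonneg.mpr (le_of_lt hx))

theorem HasDerivAt.nonpos_of_eventually_nonpos_right (hf : HasDerivAt f f' a) (ha : f a = 0)
    (h : ∀ᶠ x in 𝓝[>] a, f x ≤ 0) : f' ≤ 0 := by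
  simpa using hf.neg.nonneg_of_eventually_nonneg_right (by simp [ha]) (by simpa using h)

theorem HasDerivAt.eventually_pos_left_of_neg (hf : HasDerivAt f f' a) (ha : f a = 0)
    (hf' : f' < 0) : ∀ᶠ x in 𝓝[<] a, 0 < f x := by
  have hslope : ∀ᶠ x in 𝓝[<] a, slope f a x < 0 :=
    (hasDerivAt_iff_tendsto_slope.mp hf |>.mono_left (nhdsLT_le_nhdsNE a)).eventually_lt_const hf'
  filter_upwards [hslope, self_mem_nhdsWithin] with x hs hx
  rw [slope_def_field, ha, sub_zero] at hs
  exact ((div_neg_iff.mp hs).resolve_right fun h ↦ h.2.not_gt (sub_neg.mpr hx)).1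

end SignLemmas

section HorizonQuartic

variable {Λ M Q : ℝ}

/-- `G(r) = r² μ(r)`: a polynomial with the same positive roots as `μ`. -/
noncomputable def horizonQuartic (Λ M Q r : ℝ) : ℝ := r ^ 2 - 2 * M * r - Λ * r ^ 4 / 3 + Q ^ 2

theorem continuous_horizonQuartic : Continuous (horizonQuartic Λ M Q) := by
  unfold horizonQuartic
  fun_prop

theorem hasDerivAt_horizonQuartic (r : ℝ) :
    HasDerivAt (horizonQuartic Λ M Q) (2 * r - 2 * M - 4 * Λ * r ^ 3 / 3) r := by
  have h := (((hasDerivAt_pow 2 r).sub ((hasDerivAt_id r).const_mul (2 * M))).sub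
    (((hasDerivAt_pow 4 r).const_mul Λ).div_const 3)).add_const (Q ^ 2)
  exact h.congr_deriv (by norm_num; ring)

theorem mu_eq_horizonQuartic_div {r : ℝ} (hr : r ≠ 0) :
    mu Λ M Q r = horizonQuartic Λ M Q r / r ^ 2 := by
  unfold mu horizonQuartic
  field_simp

theorem horizonQuartic_eq_zero_iff {r : ℝ} (hr : r ≠ 0) :
    horizonQuartic Λ M Q r = 0 ↔ mu Λ M Q r = 0 := by
  simp [mu_eq_horizonQuartic_div hr, hr]

theorem hasDerivAt_mu_of_horizonQuartic_eq_zero {r : ℝ} (hr : r ≠ 0)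
    (h0 : horizonQuartic Λ M Q r = 0) :
    HasDerivAt (mu Λ M Q) ((2 * r - 2 * M - 4 * Λ * r ^ 3 / 3) / r ^ 2) r := by
  have h := (hasDerivAt_horizonQuartic (Λ := Λ) (M := M) (Q := Q) r).div (hasDerivAt_pow 2 r)
    (pow_ne_zero 2 hr)
  rw [h0] at h
  refine (h.congr_of_eventuallyEq ?_).congr_deriv ?_
  · filter_upwards [isOpen_ne.mem_nhds hr] with x hx
    exact mu_eq_horizonQuartic_div hx
  · field_simp
    ring

theorem exists_gt_horizonQuartic_neg (hΛ : 0 < Λ) (hM : 0 ≤ M) (a : ℝ) :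
    ∃ R, a < R ∧ horizonQuartic Λ M Q R < 0 := by
  set A := 3 * (1 + Q ^ 2) / Λ
  have hA : 0 < A := by positivity
  refine ⟨|a| + 1 + A, by linarith [le_abs_self a, abs_nonneg a], ?_⟩
  set R := |a| + 1 + A
  have hR1 : 1 ≤ R := by linarith [abs_nonneg a]
  have hΛR : 3 * (1 + Q ^ 2) < Λ * R := by
    have : Λ * A = 3 * (1 + Q ^ 2) := mul_div_cancel₀ _ hΛ.ne'
    nlinarith [abs_nonneg a]
  have hR3 : R ^ 2 ≤ R ^ 3 := by nlinarith
  unfold horizonQuartic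
  nlinarith [mul_lt_mul_of_pos_right hΛR (by positivity : (0 : ℝ) < R ^ 3), one_le_pow₀ hR1 (n := 3)]

end HorizonQuartic

theorem horizonQuartic_pos_of_mem_Ioo {Λ M Q rm rp : ℝ} (hΛ : 0 < Λ) (hM : 0 ≤ M)
    (hrm : 0 < rm) (hlt : rm < rp) (hμp : mu Λ M Q rp = 0) (hdp : deriv (mu Λ M Q) rp ≠ 0)
    (hne : ∀ r : ℝ, (rm < r ∧ r < rp) ∨ rp < r → mu Λ M Q r ≠ 0) :
    ∀ r ∈ Ioo rm rp, 0 < horizonQuartic Λ M Q r := by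
  have hrp : 0 < rp := hrm.trans hlt
  have hGne : ∀ r, (rm < r ∧ r < rp) ∨ rp < r → horizonQuartic Λ M Q r ≠ 0 := by
    refine fun r hr ↦ (horizonQuartic_eq_zero_iff ?_).not.mpr (hne r hr)
    rcases hr with ⟨hr, -⟩ | hr <;> linarith
  have hGp : horizonQuartic Λ M Q rp = 0 := (horizonQuartic_eq_zero_iff hrp.ne').mpr hμp
  have hGcont : ∀ s, ContinuousOn (horizonQuartic Λ M Q) s :=
    fun _ ↦ continuous_horizonQuartic.continuousOn
  obtain ⟨R, hR, hGR⟩ := exists_gt_horizonQuartic_neg (Q := Q) hΛ hM rp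
  have hGneg : ∀ r ∈ Ioi rp, horizonQuartic Λ M Q r < 0 :=
    isPreconnected_Ioi.neg_of_ne_zero (hGcont _) (fun r hr ↦ hGne r (Or.inr hr)) hR hGR
  -- `rp` is a simple root with `G < 0` to its right, so `G' rp < 0` and `G > 0` just to its left.
  have hG'p_nonpos := (hasDerivAt_horizonQuartic rp).nonpos_of_eventually_nonpos_right hGp
    (eventually_nhdsWithin_of_forall fun r hr ↦ (hGneg r hr).le)
  have hG'p_ne : 2 * rp - 2 * M - 4 * Λ * rp ^ 3 / 3 ≠ 0 := by
    intro h0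
    apply hdp
    rw [(hasDerivAt_mu_of_horizonQuartic_eq_zero hrp.ne' hGp).deriv, h0, zero_div]
  obtain ⟨r₁, hGr₁, hr₁⟩ := ((hasDerivAt_horizonQuartic rp).eventually_pos_left_of_neg hGp
    (lt_of_le_of_ne hG'p_nonpos hG'p_ne)).and (Ioo_mem_nhdsLT hlt) |>.exists
  exact isPreconnected_Ioo.pos_of_ne_zero (hGcont _) (fun r hr ↦ hGne r (Or.inl hr)) hr₁ hGr₁

theorem sq_lt_mul_of_horizonQuartic_eq_zero {Λ M Q r : ℝ} (hΛ : 0 < Λ) (hr : 0 < r)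
    (h0 : horizonQuartic Λ M Q r = 0) (hd : 0 ≤ 2 * r - 2 * M - 4 * Λ * r ^ 3 / 3) :
    Q ^ 2 < M * r := by
  unfold horizonQuartic at h0
  nlinarith [mul_pos hΛ (pow_pos hr 4)]

theorem sq_lt_mul_of_nondegAt {Λ M Q rm rp : ℝ} (hΛ : 0 < Λ) (hM : 0 ≤ M)
    (h : NondegAt Λ M Q rm rp) : Q ^ 2 < M * rm := by
  obtain ⟨hrm, hlt, hμm, hμp, -, hdp, hne, -⟩ := h
  have hGm : horizonQuartic Λ M Q rm = 0 := (horizonQuartic_eq_zero_iff hrm.ne').mpr hμm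
  have hGpos := horizonQuartic_pos_of_mem_Ioo hΛ hM hrm hlt hμp hdp hne
  refine sq_lt_mul_of_horizonQuartic_eq_zero hΛ hrm hGm
    ((hasDerivAt_horizonQuartic rm).nonneg_of_eventually_nonneg_right hGm ?_)
  filter_upwards [Ioo_mem_nhdsGT hlt] with r hr using (hGpos r hr).le

/-- Positivity of `H₊ = 1 − 4Q²/(c̃ r)` and `H₋ = (k² − 2) + (6M/r)(1 − 4Q c₊/(3M))`
on `[r₋, r₊]`, where `c̃ = 3M + √(9M² + 4(k² − 2)Q²)` and `c₊ = −Q(k² − 2)/(2c̃)`,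
for non-degenerate RNdS parameters and `k² ≥ 2`. -/
theorem Hpm_positive (Λ M Q rm rp k ctilde cplus : ℝ) (hΛ : 0 < Λ) (hM : 0 < M)
    (h : NondegAt Λ M Q rm rp) (hk : 2 ≤ k ^ 2)
    (hct : ctilde = 3 * M + Real.sqrt (9 * M ^ 2 + 4 * (k ^ 2 - 2) * Q ^ 2))
    (hcp : cplus = -(Q * (k ^ 2 - 2)) / (2 * ctilde)) :
    ∀ r ∈ Set.Icc rm rp,
      0 < 1 - 4 * Q ^ 2 / (ctilde * r) ∧
      0 < (k ^ 2 - 2) + (6 * M / r) * (1 - 4 * Q * cplus / (3 * M)) := by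
  intro r hr
  have hQ : Q ^ 2 < M * rm := sq_lt_mul_of_nondegAt hΛ hM.le h
  have hr0 : 0 < r := h.1.trans_le hr.1
  have hct6 : 6 * M ≤ ctilde := by
    have : 3 * M ≤ Real.sqrt (9 * M ^ 2 + 4 * (k ^ 2 - 2) * Q ^ 2) :=
      Real.le_sqrt_of_sq_le (by nlinarith [sq_nonneg Q])
    linarith
  have hct0 : 0 < ctilde := by linarith
  constructor
  · rw [sub_pos, div_lt_one (by positivity)]
    nlinarith [hr.1]
  · have hcp' : 4 * Q * cplus / (3 * M) = -(2 * Q ^ 2 * (k ^ 2 - 2) / (3 * M * ctilde)) := by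
      rw [hcp]
      field_simp
      ring
    have : 0 ≤ 2 * Q ^ 2 * (k ^ 2 - 2) / (3 * M * ctilde) :=
      div_nonneg (mul_nonneg (by positivity) (sub_nonneg.mpr hk)) (by positivity)
    rw [hcp', sub_neg_eq_add]
    exact add_pos_of_nonneg_of_pos (sub_nonneg.mpr hk) (mul_pos (by positivity) (by linarith))
end

section
/- Let r₋ < r₊ be real numbers. Let w, W : [r₋, r₊] → ℝ be continuous with w(r₋) = w(r₊) = 0, and w(r) > 0 and W(r) > 0 for all r ∈ (r₋, r₊). Let Ψ : [r₋, r₊] → ℂ be continuously differentiable, suppose the function w·Ψ′ is differentiable on (r₋, r₊), and suppose (wΨ′)′(r) = W(r)Ψ(r) for all r ∈ (r₋, r₊). Then Ψ is identically zero on [r₋, r₊]. -/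
/-- Degenerate Sturm–Liouville uniqueness: if `Ψ` is `C¹` on `[r₋, r₊]` (with derivative
`Ψd` continuous up to the endpoints), `w·Ψ′` is differentiable on `(r₋, r₊)` with
`(wΨ′)′ = W·Ψ` there, where `w, W` are continuous on `[r₋, r₊]`, positive on `(r₋, r₊)`,
and `w` vanishes at the endpoints, then `Ψ ≡ 0` on `[r₋, r₊]`. -/
theorem sturm_liouville_degenerate_uniqueness (rm rp : ℝ) (hlt : rm < rp)
    (w W : ℝ → ℝ)
    (hw : ContinuousOn w (Set.Icc rm rp)) (hW : ContinuousOn W (Set.Icc rm rp))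
    (hw0 : w rm = 0) (hw1 : w rp = 0)
    (hwpos : ∀ r ∈ Set.Ioo rm rp, 0 < w r)
    (hWpos : ∀ r ∈ Set.Ioo rm rp, 0 < W r)
    (Ψ Ψd : ℝ → ℂ)
    (hΨ : ∀ r ∈ Set.Icc rm rp, HasDerivWithinAt Ψ (Ψd r) (Set.Icc rm rp) r)
    (hΨd : ContinuousOn Ψd (Set.Icc rm rp))
    (hode : ∀ r ∈ Set.Ioo rm rp,
      HasDerivAt (fun s => (w s : ℂ) * Ψd s) ((W r : ℂ) * Ψ r) r) :
    ∀ r ∈ Set.Icc rm rp, Ψ r = 0 := by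
  have hΨc : ContinuousOn Ψ (Set.Icc rm rp) := fun r hr => (hΨ r hr).continuousWithinAt
  set g : ℝ → ℂ := fun s => (w s : ℂ) * Ψd s with hg
  set F : ℝ → ℝ := fun r => (Ψ r).re * (g r).re + (Ψ r).im * (g r).im with hF
  set E : ℝ → ℝ := fun r =>
      ((Ψd r).re * (g r).re + (Ψ r).re * ((W r : ℂ) * Ψ r).re) +
      ((Ψd r).im * (g r).im + (Ψ r).im * ((W r : ℂ) * Ψ r).im) with hE
  -- derivative of F on the interior
  have hFderiv : ∀ r ∈ Set.Ioo rm rp, HasDerivAt F (E r) r := by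
    intro r hr
    have hrmem : r ∈ Set.Icc rm rp := Set.Ioo_subset_Icc_self hr
    have hnhds : Set.Icc rm rp ∈ nhds r :=
      Icc_mem_nhds hr.1 hr.2
    have hΨ' : HasDerivAt Ψ (Ψd r) r := (hΨ r hrmem).hasDerivAt hnhds
    have hu : HasDerivAt (fun s => (Ψ s).re) (Ψd r).re r :=
      Complex.reCLM.hasFDerivAt.comp_hasDerivAt r hΨ'
    have hv : HasDerivAt (fun s => (Ψ s).im) (Ψd r).im r :=
      Complex.imCLM.hasFDerivAt.comp_hasDerivAt r hΨ'
    have hgd : HasDerivAt g ((W r : ℂ) * Ψ r) r := hode r hr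
    have hgr : HasDerivAt (fun s => (g s).re) ((W r : ℂ) * Ψ r).re r :=
      Complex.reCLM.hasFDerivAt.comp_hasDerivAt r hgd
    have hgi : HasDerivAt (fun s => (g s).im) ((W r : ℂ) * Ψ r).im r :=
      Complex.imCLM.hasFDerivAt.comp_hasDerivAt r hgd
    exact (hu.mul hgr).add (hv.mul hgi)
  -- E nonneg on the interior, in fact E r = w r * |Ψd r|² + W r * |Ψ r|²
  have hEeq : ∀ r ∈ Set.Ioo rm rp,
      E r = w r * ((Ψd r).re ^ 2 + (Ψd r).im ^ 2) + W r * ((Ψ r).re ^ 2 + (Ψ r).im ^ 2) := by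
    intro r hr
    simp only [hE, hg, Complex.mul_re, Complex.mul_im, Complex.ofReal_re, Complex.ofReal_im]
    ring
  have hEnonneg : ∀ r ∈ Set.Ioo rm rp, 0 ≤ E r := by
    intro r hr
    rw [hEeq r hr]
    have := (hwpos r hr).le
    have := (hWpos r hr).le
    positivity
  -- F continuous on Icc
  have hFc : ContinuousOn F (Set.Icc rm rp) := by
    apply ContinuousOn.add
    · exact (Complex.continuous_re.comp_continuousOn hΨc).mul
        ((hw.mul (Complex.continuous_re.comp_continuousOn hΨd)).congr
          (by intro x hx; simp [hg, Complex.mul_re]))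
    · exact (Complex.continuous_im.comp_continuousOn hΨc).mul
        ((hw.mul (Complex.continuous_im.comp_continuousOn hΨd)).congr
          (by intro x hx; simp [hg, Complex.mul_im]))
  -- F monotone on Icc
  have hmono : MonotoneOn F (Set.Icc rm rp) := by
    apply monotoneOn_of_hasDerivWithinAt_nonneg (convex_Icc rm rp) hFc
      (f' := E)
    · intro x hx
      rw [interior_Icc] at hx ⊢
      exact (hFderiv x hx).hasDerivWithinAt
    · intro x hx
      rw [interior_Icc] at hx
      exact hEnonneg x hx
  -- boundary values of F
  have hFrm : F rm = 0 := by simp [hF, hg, hw0]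
  have hFrp : F rp = 0 := by simp [hF, hg, hw1]
  -- F ≡ 0 on Icc
  have hF0 : ∀ r ∈ Set.Icc rm rp, F r = 0 := by
    intro r hr
    have h1 := hmono (Set.left_mem_Icc.2 hlt.le) hr hr.1
    have h2 := hmono hr (Set.right_mem_Icc.2 hlt.le) hr.2
    rw [hFrm] at h1; rw [hFrp] at h2
    linarith
  -- hence E ≡ 0 on Ioo
  have hE0 : ∀ r ∈ Set.Ioo rm rp, E r = 0 := by
    intro r hr
    have heq : F =ᶠ[nhds r] (fun _ => (0 : ℝ)) := by
      filter_upwards [Ioo_mem_nhds hr.1 hr.2] with x hx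
      exact hF0 x (Set.Ioo_subset_Icc_self hx)
    have h1 : HasDerivAt (fun _ => (0 : ℝ)) (E r) r :=
      (hFderiv r hr).congr_of_eventuallyEq heq.symm
    have h2 : HasDerivAt (fun _ => (0 : ℝ)) 0 r := hasDerivAt_const r 0
    exact h1.unique h2
  -- hence Ψ ≡ 0 on Ioo
  have hΨ0 : ∀ r ∈ Set.Ioo rm rp, Ψ r = 0 := by
    intro r hr
    have h := hE0 r hr
    rw [hEeq r hr] at h
    have hwp := hwpos r hr
    have hWp := hWpos r hr
    have hA : 0 ≤ w r * ((Ψd r).re ^ 2 + (Ψd r).im ^ 2) := by positivity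
    have hB : (Ψ r).re ^ 2 + (Ψ r).im ^ 2 = 0 := by
      have hB1 : W r * ((Ψ r).re ^ 2 + (Ψ r).im ^ 2) ≤ 0 := by linarith
      have hB2 : 0 ≤ (Ψ r).re ^ 2 + (Ψ r).im ^ 2 := by positivity
      nlinarith
    have hre : (Ψ r).re = 0 := by
      have : (Ψ r).re ^ 2 = 0 :=
        le_antisymm (by nlinarith [sq_nonneg (Ψ r).im]) (sq_nonneg _)
      exact pow_eq_zero_iff (by norm_num) |>.mp this
    have him : (Ψ r).im = 0 := by
      have : (Ψ r).im ^ 2 = 0 :=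
        le_antisymm (by nlinarith [sq_nonneg (Ψ r).re]) (sq_nonneg _)
      exact pow_eq_zero_iff (by norm_num) |>.mp this
    exact Complex.ext hre him
  -- extend to the closed interval by continuity
  intro r hr
  rcases eq_or_lt_of_le hr.1 with h1 | h1
  · rw [← h1]
    have hrm : rm ∈ Set.Icc rm rp := Set.left_mem_Icc.2 hlt.le
    have hc : Filter.Tendsto Ψ (nhdsWithin rm (Set.Ioo rm rp)) (nhds (Ψ rm)) :=
      (hΨc rm hrm).mono_left (nhdsWithin_mono _ Set.Ioo_subset_Icc_self)
    have hc0 : Filter.Tendsto Ψ (nhdsWithin rm (Set.Ioo rm rp)) (nhds 0) := by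
      refine Filter.Tendsto.congr' ?_ tendsto_const_nhds
      filter_upwards [self_mem_nhdsWithin] with x hx
      exact (hΨ0 x hx).symm
    haveI : (nhdsWithin rm (Set.Ioo rm rp)).NeBot := by
      rw [nhdsWithin_Ioo_eq_nhdsGT hlt]
      infer_instance
    exact tendsto_nhds_unique hc hc0
  rcases eq_or_lt_of_le hr.2 with h2 | h2
  · rw [h2]
    have hrp : rp ∈ Set.Icc rm rp := Set.right_mem_Icc.2 hlt.le
    have hc : Filter.Tendsto Ψ (nhdsWithin rp (Set.Ioo rm rp)) (nhds (Ψ rp)) :=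
      (hΨc rp hrp).mono_left (nhdsWithin_mono _ Set.Ioo_subset_Icc_self)
    have hc0 : Filter.Tendsto Ψ (nhdsWithin rp (Set.Ioo rm rp)) (nhds 0) := by
      refine Filter.Tendsto.congr' ?_ tendsto_const_nhds
      filter_upwards [self_mem_nhdsWithin] with x hx
      exact (hΨ0 x hx).symm
    haveI : (nhdsWithin rp (Set.Ioo rm rp)).NeBot := by
      rw [nhdsWithin_Ioo_eq_nhdsLT hlt]
      infer_instance
    exact tendsto_nhds_unique hc hc0
  exact hΨ0 r ⟨h1, h2⟩
end

section
/- Let r₋ < r₊ be real numbers, let w, ρ : (r₋, r₊) → ℝ be continuous and everywhere positive, and let Ṽ : (r₋, r₊) → ℝ be continuous with Ṽ ≥ 0. Let σ ∈ ℂ with Im σ > 0. Suppose Ψ : (r₋, r₊) → ℂ is continuously differentiable, w·Ψ′ is differentiable, and (wΨ′)′(r) = ρ(r)(Ṽ(r) − σ²)Ψ(r) for all r ∈ (r₋, r₊). Assume moreover that the functions w|Ψ′|², ρ|Ψ|² and ρṼ|Ψ|² are integrable on (r₋, r₊), and that w(r)Ψ′(r)·conj(Ψ(r)) → 0 as r →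 r₋⁺ and as r → r₊⁻. Then Ψ is identically zero. -/
/-!
Pair the equation with `conj Ψ` and integrate by parts: the boundary terms vanish, so
`∫ ρṼ|Ψ|² + ∫ w|Ψ′|² = σ² ∫ ρ|Ψ|²`. The left side is real and non-negative, whereas `σ²` is not
a non-negative real when `Im σ ≠ 0`; hence `∫ ρ|Ψ|² = 0`, and `Ψ`, being continuous, vanishes.
-/

open MeasureTheory Set Filter Topology ComplexConjugate

theorem Complex.eq_zero_of_ofReal_eq_sq_mul_ofReal {σ : ℂ} (hσ : σ.im ≠ 0) {A B : ℝ}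
    (hA : 0 ≤ A) (hB : 0 ≤ B) (h : (A : ℂ) = σ ^ 2 * B) : B = 0 := by
  have hre : A = (σ.re ^ 2 - σ.im ^ 2) * B := by simpa [sq] using congrArg Complex.re h
  have him : σ.re * σ.im * B = 0 := by
    have := congrArg Complex.im h
    simp only [Complex.ofReal_im, Complex.mul_im, Complex.ofReal_re, sq, Complex.mul_re] at this
    linarith
  by_contra hB0
  have hσre : σ.re = 0 := by simpa [hσ, hB0] using him
  have hpos : 0 < σ.im ^ 2 * B := mul_pos (by positivity) (lt_of_le_of_ne hB (Ne.symm hB0))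
  rw [hσre] at hre
  linarith

theorem integral_Ioo_eq_zero_of_hasDerivAt_of_tendsto_zero {E : Type*} [NormedAddCommGroup E]
    [NormedSpace ℝ E] [CompleteSpace E] {f f' : ℝ → E} {a b : ℝ} (hab : a < b)
    (hderiv : ∀ x ∈ Ioo a b, HasDerivAt f (f' x) x) (hint : IntegrableOn f' (Ioo a b))
    (ha : Tendsto f (𝓝[>] a) (𝓝 0)) (hb : Tendsto f (𝓝[<] b) (𝓝 0)) :
    ∫ x in Ioo a b, f' x = 0 := by
  have hint' : IntervalIntegrable f' volume a b :=
    (intervalIntegrable_iff_integrableOn_Ioo_of_le hab.le).2 hint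
  rw [← integral_Ioc_eq_integral_Ioo, ← intervalIntegral.integral_of_le hab.le,
    intervalIntegral.integral_eq_sub_of_hasDerivAt_of_tendsto hab hderiv hint' ha hb, sub_zero]

theorem eqOn_zero_of_setIntegral_mul_sq_norm_eq_zero {X E : Type*} [TopologicalSpace X]
    [MeasurableSpace X] [OpensMeasurableSpace X] {μ : Measure X} [μ.IsOpenPosMeasure]
    [NormedAddCommGroup E] {U : Set X} (hU : IsOpen U) {ρ : X → ℝ} {f : X → E}
    (hρ : ∀ x ∈ U, 0 < ρ x) (hf : ContinuousOn f U)
    (hint : IntegrableOn (fun x => ρ x * ‖f x‖ ^ 2) U μ)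
    (h0 : ∫ x in U, ρ x * ‖f x‖ ^ 2 ∂μ = 0) : EqOn f 0 U := by
  have hnonneg : 0 ≤ᵐ[μ.restrict U] fun x => ρ x * ‖f x‖ ^ 2 := by
    filter_upwards [ae_restrict_mem hU.measurableSet] with x hx
    exact mul_nonneg (hρ x hx).le (sq_nonneg _)
  have hae : (fun x => ρ x * ‖f x‖ ^ 2) =ᵐ[μ.restrict U] 0 :=
    (integral_eq_zero_iff_of_nonneg_ae hnonneg hint).1 h0
  refine μ.eqOn_open_of_ae_eq ?_ hU hf continuousOn_const
  filter_upwards [hae, ae_restrict_mem hU.measurableSet] with x hx hxU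
  simpa [(hρ x hxU).ne'] using hx

theorem hasDerivAt_mul_deriv_mul_conj {w ρ V : ℝ → ℝ} {σ : ℂ} {Ψ Ψd : ℝ → ℂ} {x : ℝ}
    (hΨ : HasDerivAt Ψ (Ψd x) x)
    (hode : HasDerivAt (fun s => (w s : ℂ) * Ψd s) (ρ x * (V x - σ ^ 2) * Ψ x) x) :
    HasDerivAt (fun s => (w s : ℂ) * Ψd s * conj (Ψ s))
      (((ρ x * V x * ‖Ψ x‖ ^ 2 + w x * ‖Ψd x‖ ^ 2 : ℝ) : ℂ) - σ ^ 2 * (ρ x * ‖Ψ x‖ ^ 2 : ℝ))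
      x := by
  refine (hode.mul hΨ.star).congr_deriv ?_
  simp only [Complex.star_def, mul_assoc, Complex.mul_conj, Complex.normSq_eq_norm_sq]
  push_cast
  ring

theorem sturm_liouville_upper_half_plane_general (rm rp : ℝ)
    (w ρ Vt : ℝ → ℝ)
    (hwpos : ∀ r ∈ Set.Ioo rm rp, 0 < w r)
    (hρpos : ∀ r ∈ Set.Ioo rm rp, 0 < ρ r)
    (hVtnn : ∀ r ∈ Set.Ioo rm rp, 0 ≤ Vt r)
    (σ : ℂ) (hσ : 0 < σ.im)
    (Ψ Ψd : ℝ → ℂ)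
    (hΨ : ∀ r ∈ Set.Ioo rm rp, HasDerivAt Ψ (Ψd r) r)
    (hode : ∀ r ∈ Set.Ioo rm rp,
      HasDerivAt (fun s => (w s : ℂ) * Ψd s)
        ((ρ r : ℂ) * ((Vt r : ℂ) - σ ^ 2) * Ψ r) r)
    (hint1 : IntegrableOn (fun r => w r * ‖Ψd r‖ ^ 2) (Set.Ioo rm rp))
    (hint2 : IntegrableOn (fun r => ρ r * ‖Ψ r‖ ^ 2) (Set.Ioo rm rp))
    (hint3 : IntegrableOn (fun r => ρ r * Vt r * ‖Ψ r‖ ^ 2) (Set.Ioo rm rp))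
    (hbdry1 : Filter.Tendsto (fun r => (w r : ℂ) * Ψd r * (starRingEnd ℂ) (Ψ r))
      (nhdsWithin rm (Set.Ioi rm)) (nhds 0))
    (hbdry2 : Filter.Tendsto (fun r => (w r : ℂ) * Ψd r * (starRingEnd ℂ) (Ψ r))
      (nhdsWithin rp (Set.Iio rp)) (nhds 0)) :
    ∀ r ∈ Set.Ioo rm rp, Ψ r = 0 := by
  intro r hr
  have henergy : IntegrableOn (fun r => ρ r * Vt r * ‖Ψ r‖ ^ 2 + w r * ‖Ψd r‖ ^ 2) (Ioo rm rp) :=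
    hint3.add hint1
  have hflux : ∫ x in Ioo rm rp, ((ρ x * Vt x * ‖Ψ x‖ ^ 2 + w x * ‖Ψd x‖ ^ 2 : ℝ) : ℂ)
      - σ ^ 2 * (ρ x * ‖Ψ x‖ ^ 2 : ℝ) = 0 :=
    integral_Ioo_eq_zero_of_hasDerivAt_of_tendsto_zero (hr.1.trans hr.2)
      (fun x hx => hasDerivAt_mul_deriv_mul_conj (hΨ x hx) (hode x hx))
      (henergy.ofReal.sub (hint2.ofReal.const_mul _)) hbdry1 hbdry2
  rw [integral_sub henergy.ofReal (hint2.ofReal.const_mul _), integral_const_mul,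
    integral_complex_ofReal, integral_complex_ofReal, sub_eq_zero] at hflux
  have henergy_nonneg : 0 ≤ ∫ x in Ioo rm rp, ρ x * Vt x * ‖Ψ x‖ ^ 2 + w x * ‖Ψd x‖ ^ 2 :=
    setIntegral_nonneg measurableSet_Ioo fun x hx =>
      add_nonneg (mul_nonneg (mul_nonneg (hρpos x hx).le (hVtnn x hx)) (sq_nonneg _))
        (mul_nonneg (hwpos x hx).le (sq_nonneg _))
  have hmass_nonneg : 0 ≤ ∫ x in Ioo rm rp, ρ x * ‖Ψ x‖ ^ 2 :=
    setIntegral_nonneg measurableSet_Ioo fun x hx => mul_nonneg (hρpos x hx).le (sq_nonneg _)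
  have hmass : ∫ x in Ioo rm rp, ρ x * ‖Ψ x‖ ^ 2 = 0 :=
    Complex.eq_zero_of_ofReal_eq_sq_mul_ofReal hσ.ne' henergy_nonneg hmass_nonneg hflux
  exact eqOn_zero_of_setIntegral_mul_sq_norm_eq_zero isOpen_Ioo hρpos
    (fun x hx => (hΨ x hx).continuousAt.continuousWithinAt) hint2 hmass hr

/-- Sturm–Liouville non-existence of modes with `Im σ > 0`: if `Ψ` is `C¹` on `(r₋, r₊)`
and `(wΨ′)′ = ρ(Ṽ − σ²)Ψ` there, with `w, ρ` continuous positive, `Ṽ` continuous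
non-negative, the energy integrands integrable, and the boundary pairing
`w Ψ′ conj(Ψ)` tending to `0` at both endpoints, then `Ψ ≡ 0`. -/
theorem sturm_liouville_upper_half_plane (rm rp : ℝ) (hlt : rm < rp)
    (w ρ Vt : ℝ → ℝ)
    (hw : ContinuousOn w (Set.Ioo rm rp)) (hρ : ContinuousOn ρ (Set.Ioo rm rp))
    (hVt : ContinuousOn Vt (Set.Ioo rm rp))
    (hwpos : ∀ r ∈ Set.Ioo rm rp, 0 < w r)
    (hρpos : ∀ r ∈ Set.Ioo rm rp, 0 < ρ r)
    (hVtnn : ∀ r ∈ Set.Ioo rm rp, 0 ≤ Vt r)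
    (σ : ℂ) (hσ : 0 < σ.im)
    (Ψ Ψd : ℝ → ℂ)
    (hΨ : ∀ r ∈ Set.Ioo rm rp, HasDerivAt Ψ (Ψd r) r)
    (hΨd : ContinuousOn Ψd (Set.Ioo rm rp))
    (hode : ∀ r ∈ Set.Ioo rm rp,
      HasDerivAt (fun s => (w s : ℂ) * Ψd s)
        ((ρ r : ℂ) * ((Vt r : ℂ) - σ ^ 2) * Ψ r) r)
    (hint1 : IntegrableOn (fun r => w r * ‖Ψd r‖ ^ 2) (Set.Ioo rm rp))
    (hint2 : IntegrableOn (fun r => ρ r * ‖Ψ r‖ ^ 2) (Set.Ioo rm rp))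
    (hint3 : IntegrableOn (fun r => ρ r * Vt r * ‖Ψ r‖ ^ 2) (Set.Ioo rm rp))
    (hbdry1 : Filter.Tendsto (fun r => (w r : ℂ) * Ψd r * (starRingEnd ℂ) (Ψ r))
      (nhdsWithin rm (Set.Ioi rm)) (nhds 0))
    (hbdry2 : Filter.Tendsto (fun r => (w r : ℂ) * Ψd r * (starRingEnd ℂ) (Ψ r))
      (nhdsWithin rp (Set.Iio rp)) (nhds 0)) :
    ∀ r ∈ Set.Ioo rm rp, Ψ r = 0 :=
  sturm_liouville_upper_half_plane_general rm rp w ρ Vt hwpos hρpos hVtnn σ hσ Ψ Ψd hΨ hode hint1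
    hint2 hint3 hbdry1 hbdry2
end
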